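/- arXiv:2404.05542 — 9 statements merged into one kernel-verified Lean document; each statement's English description precedes it below -/
import Mathlib

section
/- For every simple graph G, the total chromatic number of G equals the chromatic number of the square of the 2-nd subdivision of G, i.e., χ''(G) = χ(G^{2/2}). -/
open SimpleGraph

/-- Data for an inner vertex of the `n`-th subdivision: it lies on the subdivided
edge `u w` at distance `i` from `u` (so `1 ≤ i ≤ n-1`). -/
structure SubdivPre {V : Type} (G : SimpleGraph V) (n : ℕ) where
  u : V
  w : V
  i : ℕ
  adj : G.Adj u w
  hi1 : 1 ≤ i
  hi2 : i ≤ n - 1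

/-- `(u,w,i)` and `(w,u,n-i)` describe the same inner vertex. -/
def SubdivRel {V : Type} (G : SimpleGraph V) (n : ℕ) (p q : SubdivPre G n) : Prop :=
  p.u = q.w ∧ p.w = q.u ∧ p.i + q.i = n

/-- The inner vertices of the `n`-th subdivision of `G`. -/
def SubdivInner {V : Type} (G : SimpleGraph V) (n : ℕ) : Type := Quot (SubdivRel G n)

/-- Vertices of the `n`-th subdivision: branch vertices plus inner vertices. -/
def SubdivV {V : Type} (G : SimpleGraph V) (n : ℕ) : Type := V ⊕ SubdivInner G n

def subdivAdj {V : Type} (G : SimpleGraph V) (n : ℕ) : SubdivV G n → SubdivV G n → Prop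
  | Sum.inl _, Sum.inl _ => False
  | Sum.inl a, Sum.inr q => ∃ p : SubdivPre G n, Quot.mk _ p = q ∧
      ((p.u = a ∧ p.i = 1) ∨ (p.w = a ∧ p.i = n - 1))
  | Sum.inr q, Sum.inl a => ∃ p : SubdivPre G n, Quot.mk _ p = q ∧
      ((p.u = a ∧ p.i = 1) ∨ (p.w = a ∧ p.i = n - 1))
  | Sum.inr q, Sum.inr q' => ∃ p p' : SubdivPre G n, Quot.mk _ p = q ∧ Quot.mk _ p' = q' ∧
      p.u = p'.u ∧ p.w = p'.w ∧ (p.i + 1 = p'.i ∨ p'.i + 1 = p.i)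

/-- The `n`-th subdivision `G^{1/n}` of `G`: every edge is replaced by a path of length `n`. -/
def subdivision {V : Type} (G : SimpleGraph V) (n : ℕ) : SimpleGraph (SubdivV G n) where
  Adj x y := x ≠ y ∧ subdivAdj G n x y
  symm := by
    constructor
    rintro x y ⟨hne, h⟩
    refine ⟨hne.symm, ?_⟩
    match x, y, h with
    | Sum.inl a, Sum.inr q, h => exact h
    | Sum.inr q, Sum.inl a, h => exact h
    | Sum.inr q, Sum.inr q', ⟨p, p', h1, h2, h3, h4, h5⟩ =>
        exact ⟨p', p, h2, h1, h3.symm, h4.symm, h5.symm⟩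
  loopless := ⟨fun x h => h.1 rfl⟩

/-- The `m`-th power of a graph: join vertices at distance at most `m`. -/
def gpow {α : Type} (H : SimpleGraph α) (m : ℕ) : SimpleGraph α where
  Adj x y := x ≠ y ∧ H.Reachable x y ∧ H.dist x y ≤ m
  symm := by
    constructor
    rintro x y ⟨h1, h2, h3⟩
    exact ⟨h1.symm, h2.symm, by rwa [SimpleGraph.dist_comm]⟩
  loopless := ⟨fun x h => h.1 rfl⟩

/-- `G` has a total colouring with `m` colours: vertices and edges are coloured so that
adjacent vertices, incident edges, and an edge with either of its endpoints receive
distinct colours. -/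
def TotalColorable {V : Type} (G : SimpleGraph V) (m : ℕ) : Prop :=
  ∃ (cV : V → Fin m) (cE : G.edgeSet → Fin m),
    (∀ u v : V, G.Adj u v → cV u ≠ cV v) ∧
    (∀ e f : G.edgeSet, e ≠ f → (∃ v : V, v ∈ (e : Sym2 V) ∧ v ∈ (f : Sym2 V)) →
      cE e ≠ cE f) ∧
    (∀ (v : V) (e : G.edgeSet), v ∈ (e : Sym2 V) → cV v ≠ cE e)

/-- The total chromatic number of `G`. -/
noncomputable def totalChromaticNumber {V : Type} (G : SimpleGraph V) : ℕ∞ :=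
  ⨅ m ∈ {m : ℕ | TotalColorable G m}, (m : ℕ∞)

/-!
Every inner vertex of `G^{1/2}` is the midpoint of exactly one edge of `G`, and `G^{1/2}` only
joins a branch vertex to the midpoints of the edges containing it. Hence two vertices are at
distance at most 2 in `G^{1/2}` exactly when they are adjacent in the total graph of `G`
(adjacent vertices, distinct incident edges, or an edge and one of its endpoints). So `G^{2/2}`
is isomorphic to the total graph, whose proper colourings are exactly the total colourings of `G`.
-/

section GraphSquare

variable {α : Type} {H : SimpleGraph α}

lemma gpow_two_adj_iff {x y : α} :
    (gpow H 2).Adj x y ↔ x ≠ y ∧ (H.Adj x y ∨ ∃ z, H.Adj x z ∧ H.Adj z y) := by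
  constructor
  · rintro ⟨hne, hr, hd⟩
    obtain ⟨w, hw⟩ := hr.exists_walk_length_eq_dist
    refine ⟨hne, ?_⟩
    match w, hw ▸ hd with
    | .nil, _ => exact absurd rfl hne
    | .cons h .nil, _ => exact .inl h
    | .cons h₁ (.cons h₂ .nil), _ => exact .inr ⟨_, h₁, h₂⟩
    | .cons _ (.cons _ (.cons _ _)), hlen => simp at hlen
  · rintro ⟨hne, h | ⟨z, h₁, h₂⟩⟩
    · exact ⟨hne, h.reachable, (dist_le h.toWalk).trans (by simp)⟩
    · let w := Walk.cons h₁ (Walk.cons h₂ Walk.nil)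
      exact ⟨hne, w.reachable, (dist_le w).trans (by simp [w])⟩

end GraphSquare

section SubdivisionTwo

variable {V : Type} {G : SimpleGraph V}

lemma SubdivPre.i_eq_one (p : SubdivPre G 2) : p.i = 1 := le_antisymm p.hi2 p.hi1

def subdivTwoEdge : SubdivInner G 2 → G.edgeSet :=
  Quot.lift (fun p => ⟨s(p.u, p.w), p.adj⟩)
    (by rintro p q ⟨hu, hw, -⟩; simp only [hu, hw, Sym2.eq_swap])

lemma subdivTwo_mk_eq_of_swap {p q : SubdivPre G 2} (hu : p.u = q.w) (hw : p.w = q.u) :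
    (Quot.mk _ p : SubdivInner G 2) = Quot.mk _ q :=
  Quot.sound ⟨hu, hw, by rw [p.i_eq_one, q.i_eq_one]⟩

-- If `p` and `q` have the same orientation, both are identified with the reverse `r` of `p`.
lemma subdivTwoEdge_injective : Function.Injective (subdivTwoEdge (G := G)) := by
  rintro ⟨p⟩ ⟨q⟩ h
  rcases Sym2.eq_iff.1 (congrArg Subtype.val h) with ⟨hu, hw⟩ | ⟨hu, hw⟩
  · let r : SubdivPre G 2 := ⟨p.w, p.u, 1, p.adj.symm, le_rfl, le_rfl⟩
    exact (subdivTwo_mk_eq_of_swap (q := r) rfl rfl).trans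
      (subdivTwo_mk_eq_of_swap hw hu)
  · exact subdivTwo_mk_eq_of_swap hu hw

lemma subdivTwoEdge_surjective : Function.Surjective (subdivTwoEdge (G := G)) := by
  rintro ⟨e, he⟩
  induction e using Sym2.inductionOn with
  | _ a b => exact ⟨Quot.mk _ ⟨a, b, 1, he, le_rfl, le_rfl⟩, rfl⟩

noncomputable def subdivTwoEquiv : SubdivInner G 2 ≃ G.edgeSet :=
  .ofBijective subdivTwoEdge ⟨subdivTwoEdge_injective, subdivTwoEdge_surjective⟩

lemma subdivision_two_adj_inl_inr_iff {a : V} {q : SubdivInner G 2} :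
    (subdivision G 2).Adj (.inl a) (.inr q) ↔ a ∈ (subdivTwoEdge q : Sym2 V) := by
  constructor
  · rintro ⟨-, p, rfl, (⟨rfl, -⟩ | ⟨rfl, -⟩)⟩
    · exact Sym2.mem_mk_left _ _
    · exact Sym2.mem_mk_right _ _
  · induction q using Quot.ind with | _ p =>
    intro h
    refine ⟨Sum.inl_ne_inr, p, rfl, ?_⟩
    rcases Sym2.mem_iff.1 h with rfl | rfl
    · exact .inl ⟨rfl, p.i_eq_one⟩
    · exact .inr ⟨rfl, p.i_eq_one⟩

lemma subdivision_two_adj_inr_inl_iff {a : V} {q : SubdivInner G 2} :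
    (subdivision G 2).Adj (.inr q) (.inl a) ↔ a ∈ (subdivTwoEdge q : Sym2 V) :=
  (subdivision G 2).adj_comm _ _ |>.trans subdivision_two_adj_inl_inr_iff

lemma subdivision_two_not_adj_inl_inl (a b : V) : ¬ (subdivision G 2).Adj (.inl a) (.inl b) :=
  fun h => h.2

lemma subdivision_two_not_adj_inr_inr (q q' : SubdivInner G 2) :
    ¬ (subdivision G 2).Adj (.inr q) (.inr q') := by
  rintro ⟨-, p, p', -, -, -, -, h⟩
  rw [p.i_eq_one, p'.i_eq_one] at h
  omega

lemma gpow_subdivision_two_adj_inl_inl {a b : V} :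
    (gpow (subdivision G 2) 2).Adj (.inl a) (.inl b) ↔ G.Adj a b := by
  refine gpow_two_adj_iff.trans ⟨?_, ?_⟩
  · rintro ⟨hne, h | ⟨v | q, h₁, h₂⟩⟩
    · exact (subdivision_two_not_adj_inl_inl _ _ h).elim
    · exact (subdivision_two_not_adj_inl_inl _ _ h₁).elim
    · rw [subdivision_two_adj_inl_inr_iff] at h₁
      rw [subdivision_two_adj_inr_inl_iff] at h₂
      exact G.adj_iff_exists_edge.2 ⟨fun h => hne (h ▸ rfl), _, (subdivTwoEdge q).2, h₁, h₂⟩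
  · intro h
    obtain ⟨q, hq⟩ := subdivTwoEdge_surjective ⟨s(a, b), h⟩
    refine ⟨fun hab => h.ne (Sum.inl_injective hab), .inr ⟨.inr q, ?_, ?_⟩⟩
    · rw [subdivision_two_adj_inl_inr_iff, hq]
      exact Sym2.mem_mk_left a b
    · rw [subdivision_two_adj_inr_inl_iff, hq]
      exact Sym2.mem_mk_right a b

lemma gpow_subdivision_two_adj_inl_inr {a : V} {q : SubdivInner G 2} :
    (gpow (subdivision G 2) 2).Adj (.inl a) (.inr q) ↔ a ∈ (subdivTwoEdge q : Sym2 V) := by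
  refine gpow_two_adj_iff.trans (Iff.trans ⟨?_, fun h => ⟨h.ne, .inl h⟩⟩
    subdivision_two_adj_inl_inr_iff)
  rintro ⟨-, h | ⟨v | r, h₁, h₂⟩⟩
  · exact h
  · exact (subdivision_two_not_adj_inl_inl _ _ h₁).elim
  · exact (subdivision_two_not_adj_inr_inr _ _ h₂).elim

lemma gpow_subdivision_two_adj_inr_inr {q q' : SubdivInner G 2} :
    (gpow (subdivision G 2) 2).Adj (.inr q) (.inr q') ↔
      q ≠ q' ∧ ∃ v, v ∈ (subdivTwoEdge q : Sym2 V) ∧ v ∈ (subdivTwoEdge q' : Sym2 V) := by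
  refine gpow_two_adj_iff.trans ⟨?_, ?_⟩
  · rintro ⟨hne, h | ⟨v | r, h₁, h₂⟩⟩
    · exact (subdivision_two_not_adj_inr_inr _ _ h).elim
    · rw [subdivision_two_adj_inr_inl_iff] at h₁
      rw [subdivision_two_adj_inl_inr_iff] at h₂
      exact ⟨fun h => hne (h ▸ rfl), v, h₁, h₂⟩
    · exact (subdivision_two_not_adj_inr_inr _ _ h₁).elim
  · rintro ⟨hne, v, h₁, h₂⟩
    exact ⟨fun h => hne (Sum.inr_injective h), .inr ⟨.inl v,
      subdivision_two_adj_inr_inl_iff.2 h₁, subdivision_two_adj_inl_inr_iff.2 h₂⟩⟩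

end SubdivisionTwo

section TotalGraph

variable {V : Type} {G : SimpleGraph V}

def totalGraph (G : SimpleGraph V) : SimpleGraph (V ⊕ G.edgeSet) where
  Adj
    | .inl a, .inl b => G.Adj a b
    | .inl a, .inr e => a ∈ (e : Sym2 V)
    | .inr e, .inl a => a ∈ (e : Sym2 V)
    | .inr e, .inr f => e ≠ f ∧ ∃ v, v ∈ (e : Sym2 V) ∧ v ∈ (f : Sym2 V)
  symm := ⟨by
    rintro (a | e) (b | f) h
    exacts [h.symm, h, h, ⟨h.1.symm, h.2.imp fun _ => And.symm⟩]⟩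
  loopless := ⟨by
    rintro (a | e) h
    exacts [G.loopless.irrefl a h, h.1 rfl]⟩

lemma totalColorable_iff_colorable_totalGraph {m : ℕ} :
    TotalColorable G m ↔ (totalGraph G).Colorable m := by
  constructor
  · rintro ⟨cV, cE, hV, hE, hVE⟩
    refine ⟨.mk (Sum.elim cV cE) ?_⟩
    rintro (a | e) (b | f) h
    exacts [hV a b h, hVE a f h, (hVE b e h).symm, hE e f h.1 h.2]
  · rintro ⟨c⟩
    exact ⟨c ∘ .inl, c ∘ .inr, fun _ _ h => c.valid h, fun _ _ hne hv => c.valid ⟨hne, hv⟩,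
      fun _ _ h => c.valid h⟩

lemma totalChromaticNumber_eq_chromaticNumber_totalGraph :
    totalChromaticNumber G = (totalGraph G).chromaticNumber := by
  rw [totalChromaticNumber, chromaticNumber_eq_biInf]
  congr! 3
  exact totalColorable_iff_colorable_totalGraph

noncomputable def subdivisionTwoSqIsoTotalGraph :
    gpow (subdivision G 2) 2 ≃g totalGraph G where
  toEquiv := .sumCongr (.refl V) subdivTwoEquiv
  map_rel_iff' := by
    rintro (a | q) (b | q')
    · exact (gpow_subdivision_two_adj_inl_inl (G := G)).symm
    · exact gpow_subdivision_two_adj_inl_inr.symm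
    · exact (((gpow _ 2).adj_comm _ _).trans gpow_subdivision_two_adj_inl_inr).symm
    · exact (gpow_subdivision_two_adj_inr_inr.trans
        (and_congr_left' subdivTwoEdge_injective.ne_iff.symm)).symm

end TotalGraph

/-- The total chromatic number of `G` equals the chromatic number of the square of the
second subdivision of `G`: `χ''(G) = χ(G^{2/2})`. -/
theorem totalChromaticNumber_eq_chromaticNumber_G22 {V : Type} (G : SimpleGraph V) :
    totalChromaticNumber G = (gpow (subdivision G 2) 2).chromaticNumber := by
  rw [totalChromaticNumber_eq_chromaticNumber_totalGraph,
    chromaticNumber_congr subdivisionTwoSqIsoTotalGraph]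
end

section
/- Let k ≥ k₀ for some sufficiently large absolute integer k₀, and let r be an integer with 7·log k ≤ r ≤ k. Let S₁,…,S_k be independent random subsets of [k+r], each obtained by sampling r elements from [k+r] uniformly and independently with replacement, and let F₁,…,F_k be arbitrary fixed subsets of [k+r] each of size two. Then the probability that the family {S₁\F₁, …, S_k\F_k} has no system of distinct representatives (transversal) is at most k^{1 − r/5}. -/
open Finset Real



lemma log_ge_103 {k : ℕ} (hk : 2^150 ≤ k) : (103:ℝ) ≤ Real.log k := by
  have h2 : ((2:ℝ)^150) ≤ (k:ℝ) := by exact_mod_cast hk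
  have h3 := Real.log_le_log (by positivity) h2
  rw [Real.log_pow] at h3
  have h4 := Real.log_two_gt_d9
  norm_num at h3 ⊢
  linarith

lemma k_ge_44L {k : ℕ} (hk0 : (0:ℝ) < k) (hL : (103:ℝ) ≤ Real.log k) :
    44 * Real.log k ≤ (k:ℝ) := by
  set L := Real.log k
  have he : Real.exp L = k := Real.exp_log hk0
  have e3 : Real.exp (L/3) * Real.exp (L/3) * Real.exp (L/3) = Real.exp L := by
    rw [← Real.exp_add, ← Real.exp_add]; ring_nf
  have h1 := Real.add_one_le_exp (L/3)
  nlinarith [Real.exp_pos (L/3)]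

lemma arith_log2L {L : ℝ} (hL : (103:ℝ) ≤ L) : Real.log (2*L) ≤ (3/5)*L := by
  have h1 := Real.add_one_le_exp ((3/10)*L)
  have h2 : Real.exp ((3/10)*L) * Real.exp ((3/10)*L) = Real.exp ((3/5)*L) := by
    rw [← Real.exp_add]; ring_nf
  have h3 : 2*L ≤ Real.exp ((3/5)*L) := by nlinarith [Real.exp_pos ((3/10)*L)]
  have h4 := Real.log_le_log (by positivity : (0:ℝ) < 2*L) h3
  rwa [Real.log_exp] at h4

lemma caseA_final {L R J φ ψ c1 c2 : ℝ} (hL : (103:ℝ) ≤ L) (hR : 7*L ≤ R) (hJ : 1 ≤ J)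
    (hφ : (0.6931:ℝ) ≤ φ) (hφψ : φ ≤ ψ) (hii : (2/5)*L ≤ J*φ)
    (hc1 : c1 ≤ J*L) (hc2 : c2 ≤ J*(L+0.7)) :
    c1 + c2 + (R/5)*L ≤ R*J*ψ := by
  have hR0 : (0:ℝ) < R := by linarith
  have hJ0 : (0:ℝ) < J := by linarith
  have hφ0 : (0:ℝ) ≤ φ := by linarith
  have h1 : R*J*φ ≤ R*J*ψ :=
    mul_le_mul_of_nonneg_left hφψ (by positivity)
  have hi : (21/10)*L ≤ R*(φ/2) := by
    have := mul_le_mul hR hφ (by norm_num) (by linarith : (0:ℝ) ≤ R)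
    linarith
  have h2 : J*((21/10)*L) ≤ J*(R*(φ/2)) := mul_le_mul_of_nonneg_left hi hJ0.le
  have h3 : R*((2/5)*L) ≤ R*(J*φ) := mul_le_mul_of_nonneg_left hii hR0.le
  have h4 : J*(0.7:ℝ) ≤ J*(L/10) :=
    mul_le_mul_of_nonneg_left (by linarith : (0.7:ℝ) ≤ L/10) hJ0.le
  have h5 : J*L ≥ 0 := by positivity
  linarith

lemma caseC_final {L R J ψ c1 c2 : ℝ} (hL : (103:ℝ) ≤ L) (hR : 7*L ≤ R) (hJ : 11*L ≤ J)
    (hψ : (3/8:ℝ) ≤ ψ) (hc1 : c1 ≤ J*L) (hc2 : c2 ≤ J*(L+0.7)) :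
    c1 + c2 + (R/5)*L ≤ R*J*ψ := by
  have hR0 : (0:ℝ) < R := by linarith
  have hJ0 : (0:ℝ) < J := by linarith
  have h1 : R*J*(3/8:ℝ) ≤ R*J*ψ := mul_le_mul_of_nonneg_left hψ (by positivity)
  have h2 : (7*L)*J ≤ R*J := mul_le_mul_of_nonneg_right hR hJ0.le
  have h3 : R*(11*L) ≤ R*J := mul_le_mul_of_nonneg_left hJ hR0.le
  have h4 : J*(0.7:ℝ) ≤ J*(L/10) :=
    mul_le_mul_of_nonneg_left (by linarith : (0.7:ℝ) ≤ L/10) hJ0.le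
  have h5 : (0:ℝ) ≤ R*L := by positivity
  linarith

lemma caseB_final {L R S N J ψ c1 c2 : ℝ} (hL : (103:ℝ) ≤ L) (hR : 7*L ≤ R) (hS : 0 ≤ S)
    (hψN : R + S - 1 ≤ N*ψ) (hψ0 : 0 ≤ ψ) (hJN : (3/10)*N ≤ J) (hN0 : 0 < N)
    (hc1 : c1 ≤ S*L) (hc2 : c2 ≤ (R+S+1)*(L+0.7)) :
    c1 + c2 + (R/5)*L ≤ R*J*ψ := by
  have hR0 : (0:ℝ) < R := by linarith
  have h1 : R*((3/10)*N)*ψ ≤ R*J*ψ := by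
    have := mul_le_mul_of_nonneg_left hJN hR0.le
    exact mul_le_mul_of_nonneg_right this hψ0
  have h2 : (3/10)*R*(R+S-1) ≤ (3/10)*R*(N*ψ) := by
    have := mul_le_mul_of_nonneg_left hψN (by positivity : (0:ℝ) ≤ (3/10)*R)
    linarith
  have h3 : (21/10)*L*(R+S-1) ≤ (3/10)*R*(R+S-1) := by
    have hRS : (0:ℝ) ≤ R+S-1 := by linarith
    have := mul_le_mul_of_nonneg_right hR hRS
    nlinarith
  -- now need : c1 + c2 + (R/5)*L ≤ (21/10)*L*(R+S-1) suffices
  have h6 : (0:ℝ) ≤ L*S := by positivity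
  have h7 : 103*R ≤ L*R := mul_le_mul_of_nonneg_right hL hR0.le
  have h8 : 103*S ≤ L*S := mul_le_mul_of_nonneg_right hL hS
  nlinarith [h1, h2, h3]

lemma perj (k r j : ℕ) (hk : 2^150 ≤ k) (hr7 : 7 * Real.log k ≤ (r:ℝ)) (hrk : r ≤ k)
    (hj1 : 1 ≤ j) (hjk : j ≤ k) :
    (k.choose j : ℝ) * ((k+r).choose (j-1) : ℝ) * ((j:ℝ)+1)^(r*j)
      ≤ ((k:ℝ)+(r:ℝ))^(r*j) * (k:ℝ) ^ (-((r:ℝ)/5)) := by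
  have hkpos : 0 < k := lt_of_lt_of_le (by positivity) hk
  have hk0 : (0:ℝ) < k := by exact_mod_cast hkpos
  have hL103 : (103:ℝ) ≤ Real.log k := log_ge_103 hk
  have hk44 : 44 * Real.log k ≤ (k:ℝ) := k_ge_44L hk0 hL103
  clear hk
  have hc1pos : (0:ℝ) < (k.choose j : ℝ) := by exact_mod_cast Nat.choose_pos hjk
  have hc2pos : (0:ℝ) < ((k+r).choose (j-1) : ℝ) := by
    exact_mod_cast Nat.choose_pos (show j - 1 ≤ k + r by omega)
  have hJ1 : (1:ℝ) ≤ (j:ℝ) := by exact_mod_cast hj1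
  have hJk : (j:ℝ) ≤ (k:ℝ) := by exact_mod_cast hjk
  have hRk : (r:ℝ) ≤ (k:ℝ) := by exact_mod_cast hrk
  have hlhs : (0:ℝ) < (k.choose j : ℝ) * ((k+r).choose (j-1) : ℝ) * ((j:ℝ)+1)^(r*j) := by
    positivity
  have hrhs : (0:ℝ) < ((k:ℝ)+(r:ℝ))^(r*j) * (k:ℝ) ^ (-((r:ℝ)/5)) := by positivity
  rw [← Real.log_le_log_iff hlhs hrhs]
  rw [Real.log_mul (by positivity) (by positivity),
    Real.log_mul (ne_of_gt hc1pos) (ne_of_gt hc2pos), Real.log_pow,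
    Real.log_mul (by positivity) (by positivity), Real.log_pow, Real.log_rpow hk0]
  push_cast
  set L := Real.log k with hLdef
  set R := (r:ℝ) with hRdef
  set J := (j:ℝ) with hJdef
  set N := (k:ℝ) + (r:ℝ) with hNdef
  -- goal : log C1 + log C2 + R*J*log(J+1) ≤ R*J*log N + (-(R/5))*L
  have hR7 : 7*L ≤ R := hr7
  have hR0 : (0:ℝ) < R := by linarith
  have hNk : (k:ℝ) ≤ N := by rw [hNdef]; linarith
  have hN2k : N ≤ 2*(k:ℝ) := by rw [hNdef]; linarith
  have hN0 : (0:ℝ) < N := by linarith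
  have hNcast : ((k+r : ℕ) : ℝ) = N := by rw [hNdef]; push_cast; ring
  have hlogN_ge : L ≤ Real.log N := Real.log_le_log hk0 hNk
  have hlogN_le : Real.log N ≤ L + 0.7 := by
    have h1 := Real.log_le_log hN0 hN2k
    rw [Real.log_mul two_ne_zero (ne_of_gt hk0)] at h1
    have := Real.log_two_lt_d9
    norm_num at this ⊢
    linarith
  set ψ := Real.log N - Real.log (J+1) with hψdef
  have hexpand : R*J*ψ = R*J*Real.log N - R*J*Real.log (J+1) := by rw [hψdef]; ring
  have hlogC1A : Real.log (k.choose j : ℝ) ≤ J * L := by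
    have h : (k.choose j : ℝ) ≤ (k:ℝ)^j := by exact_mod_cast Nat.choose_le_pow k j
    have h2 := Real.log_le_log hc1pos h
    rwa [Real.log_pow] at h2
  have hlogC2A : Real.log ((k+r).choose (j-1) : ℝ) ≤ J * (L + 0.7) := by
    have h : ((k+r).choose (j-1) : ℝ) ≤ N^j := by
      rw [← hNcast]
      exact_mod_cast le_trans (Nat.choose_le_pow (k+r) (j-1))
        (Nat.pow_le_pow_right (by omega) (by omega))
    have h2 := Real.log_le_log hc2pos h
    rw [Real.log_pow] at h2
    have h3 : J * Real.log N ≤ J * (L+0.7) :=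
      mul_le_mul_of_nonneg_left hlogN_le (by linarith)
    linarith
  have hkey : Real.log (k.choose j : ℝ) + Real.log ((k+r).choose (j-1) : ℝ) + (R/5)*L
      ≤ R*J*ψ := by
    by_cases hA : 4*j ≤ k + r
    · -- Case A
      have h2j : 2*J ≤ N/2 := by
        have h : ((4*j:ℕ):ℝ) ≤ ((k+r:ℕ):ℝ) := by exact_mod_cast hA
        rw [hNcast] at h; push_cast at h; linarith
      have hφ2 : (0.6931:ℝ) ≤ Real.log N - Real.log (2*J) := by
        have h1 : Real.log (2*J) ≤ Real.log (N/2) := Real.log_le_log (by positivity) h2j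
        rw [Real.log_div (ne_of_gt hN0) two_ne_zero] at h1
        have := Real.log_two_gt_d9
        norm_num at this ⊢
        linarith
      have hψφ : Real.log N - Real.log (2*J) ≤ ψ := by
        have h : Real.log (J+1) ≤ Real.log (2*J) :=
          Real.log_le_log (by linarith) (by linarith)
        rw [hψdef]; linarith
      have hii : (2/5)*L ≤ J*(Real.log N - Real.log (2*J)) := by
        rcases le_or_gt L J with hc | hc
        · have u1 : L*(Real.log N - Real.log (2*J)) ≤ J*(Real.log N - Real.log (2*J)) :=
            mul_le_mul_of_nonneg_right hc (by linarith)
          have u2 : L*(0.6931:ℝ) ≤ L*(Real.log N - Real.log (2*J)) :=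
            mul_le_mul_of_nonneg_left hφ2 (by linarith)
          linarith
        · have h5 : Real.log (2*J) ≤ Real.log (2*L) :=
            Real.log_le_log (by positivity) (by linarith)
          have h6 : Real.log (2*L) ≤ (3/5)*L := arith_log2L hL103
          have h7 : (2/5)*L ≤ Real.log N - Real.log (2*J) := by linarith
          have h8 : 1*(Real.log N - Real.log (2*J)) ≤ J*(Real.log N - Real.log (2*J)) :=
            mul_le_mul_of_nonneg_right hJ1 (by linarith)
          linarith
      exact caseA_final hL103 hR7 hJ1 hφ2 hψφ hii hlogC1A hlogC2A
    · by_cases hC : 5*j ≤ 3*k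
      · -- Case C
        have hNJ : N < 4*J := by
          have h : ((k+r:ℕ):ℝ) < ((4*j:ℕ):ℝ) := by exact_mod_cast (show k+r < 4*j by omega)
          rw [hNcast] at h; push_cast at h; linarith
        have hJ11 : 11*L ≤ J := by linarith
        have hJ58 : J + 1 ≤ (5/8)*(k:ℝ) := by
          have h : ((5*j:ℕ):ℝ) ≤ ((3*k:ℕ):ℝ) := by exact_mod_cast hC
          push_cast at h
          linarith
        have hψ38 : (3/8:ℝ) ≤ ψ := by
          have h1 : Real.log (J+1) ≤ Real.log ((5/8)*(k:ℝ)) :=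
            Real.log_le_log (by positivity) hJ58
          rw [Real.log_mul (by norm_num) (ne_of_gt hk0)] at h1
          have h2 : Real.log (5/8:ℝ) ≤ -(3/8:ℝ) := by
            have := Real.log_le_sub_one_of_pos (show (0:ℝ) < 5/8 by norm_num)
            norm_num at this ⊢; linarith
          rw [hψdef]; linarith
        exact caseC_final hL103 hR7 hJ11 hψ38 hlogC1A hlogC2A
      · -- Case B
        set S := (k:ℝ) - J with hSdef
        have hS0 : (0:ℝ) ≤ S := by rw [hSdef]; linarith
        have hJ35 : (3/10)*N ≤ J := by
          have h : ((3*k:ℕ):ℝ) < ((5*j:ℕ):ℝ) := by exact_mod_cast (show 3*k < 5*j by omega)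
          push_cast at h
          rw [hNdef]; linarith
        have hlogC1 : Real.log (k.choose j : ℝ) ≤ S * L := by
          have h : (k.choose j : ℝ) ≤ (k:ℝ)^(k-j) := by
            rw [← Nat.choose_symm hjk]
            exact_mod_cast Nat.choose_le_pow k (k-j)
          have h2 := Real.log_le_log hc1pos h
          rw [Real.log_pow] at h2
          have hc : ((k-j:ℕ):ℝ) = S := by rw [hSdef, hJdef]; push_cast [hjk]; ring
          rwa [hc] at h2
        have hlogC2 : Real.log ((k+r).choose (j-1) : ℝ) ≤ (R+S+1) * (L + 0.7) := by
          have hle : j - 1 ≤ k + r := by omega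
          have h : ((k+r).choose (j-1) : ℝ) ≤ N^((k+r)-(j-1)) := by
            rw [← Nat.choose_symm hle, ← hNcast]
            exact_mod_cast Nat.choose_le_pow (k+r) ((k+r)-(j-1))
          have h2 := Real.log_le_log hc2pos h
          rw [Real.log_pow] at h2
          have hc : (((k+r)-(j-1):ℕ):ℝ) = R+S+1 := by
            rw [hSdef, hJdef, hRdef]
            rw [show (k+r)-(j-1) = k + r - j + 1 by omega]
            push_cast [show j ≤ k + r by omega]
            ring
          rw [hc] at h2
          have h3 : (R+S+1) * Real.log N ≤ (R+S+1) * (L+0.7) :=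
            mul_le_mul_of_nonneg_left hlogN_le (by linarith)
          exact h2.trans h3
        have hψB : R + S - 1 ≤ N * ψ := by
          have h1 := Real.log_le_sub_one_of_pos (show (0:ℝ) < (J+1)/N by positivity)
          rw [Real.log_div (by positivity) (ne_of_gt hN0)] at h1
          have h2 : 1 - (J+1)/N ≤ ψ := by rw [hψdef]; linarith
          have h3 : N * (1 - (J+1)/N) = N - (J+1) := by field_simp
          have h4 : N - (J+1) = R + S - 1 := by rw [hSdef, hNdef]; ring
          have h5 := mul_le_mul_of_nonneg_left h2 hN0.le
          rw [h3, h4] at h5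
          exact h5
        have hψ0 : (0:ℝ) ≤ ψ := by
          have hJN : J + 1 ≤ N := by rw [hNdef]; linarith
          have := Real.log_le_log (by positivity : (0:ℝ) < J+1) hJN
          rw [hψdef]; linarith
        exact caseB_final hL103 hR7 hS0 hψB hψ0 hJ35 hN0 hlogC1 hlogC2
  linarith [hkey, hexpand.le, hexpand.ge]

/-- The family of finite sets `T i` has a transversal (system of distinct
representatives): distinct elements `x i ∈ T i`. -/
def HasTransversal {k m : ℕ} (T : Fin k → Finset (Fin m)) : Prop :=
  ∃ x : Fin k → Fin m, Function.Injective x ∧ ∀ i, x i ∈ T i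


lemma event_card {k r : ℕ} (A : Fin k → Finset (Fin (k+r)))
    [DecidablePred fun ω : Fin k → Fin r → Fin (k+r) => ∀ i t, ω i t ∈ A i] :
    (univ.filter (fun ω : Fin k → Fin r → Fin (k+r) => ∀ i t, ω i t ∈ A i)).card
      = ∏ i : Fin k, (A i).card ^ r := by
  classical
  rw [← Fintype.card_subtype]
  have e : {ω : Fin k → Fin r → Fin (k+r) // ∀ i t, ω i t ∈ A i}
      ≃ ∀ i : Fin k, (Fin r → {x : Fin (k+r) // x ∈ A i}) :=
    (Equiv.subtypePiEquivPi).trans (Equiv.piCongrRight fun i => Equiv.subtypePiEquivPi)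
  rw [Fintype.card_congr e, Fintype.card_pi]
  refine Finset.prod_congr rfl fun i _ => ?_
  rw [Fintype.card_fun, Fintype.card_coe, Fintype.card_fin]

lemma count_bad (k r : ℕ) (F : Fin k → Finset (Fin (k + r))) (hF : ∀ i, (F i).card = 2) :
    (Nat.card {ω : Fin k → Fin r → Fin (k + r) //
        ¬ HasTransversal (fun i => Finset.image (ω i) Finset.univ \ F i)})
      ≤ ∑ j ∈ Finset.Icc 1 k,
          k.choose j * (k+r).choose (j-1) * ((j+1)^(r*j) * (k+r)^(r*(k-j))) := by
  classical
  rw [Nat.card_eq_fintype_card, Fintype.card_subtype]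
  set Idx := Finset (Fin k) × Finset (Fin (k+r))
  set idxSet : Finset Idx :=
    univ.filter (fun p : Idx => p.1.Nonempty ∧ p.2.card = p.1.card - 1) with hidxSet
  set event : Idx → Finset (Fin k → Fin r → Fin (k+r)) := fun p =>
    univ.filter (fun ω => ∀ i t, ω i t ∈ (if i ∈ p.1 then p.2 ∪ F i else univ)) with hevent
  -- union bound
  have hsub : (univ.filter (fun ω : Fin k → Fin r → Fin (k + r) =>
      ¬ HasTransversal (fun i => Finset.image (ω i) Finset.univ \ F i)))
      ⊆ idxSet.biUnion event := by
    intro ω hω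
    rw [mem_filter] at hω
    have hbad := hω.2
    set T : Fin k → Finset (Fin (k+r)) := fun i => Finset.image (ω i) Finset.univ \ F i with hT
    have := (Finset.all_card_le_biUnion_card_iff_exists_injective T).symm
    rw [HasTransversal] at hbad
    have hex : ¬ (∀ s : Finset (Fin k), s.card ≤ (s.biUnion T).card) := by
      intro h
      exact hbad ((Finset.all_card_le_biUnion_card_iff_exists_injective T).mp h)
    push_neg at hex
    obtain ⟨J, hJ⟩ := hex
    have hJne : J.Nonempty := by
      rw [← Finset.card_pos]; omega
    have hble : (J.biUnion T).card ≤ J.card - 1 := by omega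
    obtain ⟨W, hWsub, -, hWcard⟩ := Finset.exists_subsuperset_card_eq
      (Finset.subset_univ (J.biUnion T)) hble
      (by simpa using (J.card_le_univ.trans (by simp [Fintype.card_fin]) : J.card ≤ k + r).trans' (Nat.sub_le _ _))
    refine Finset.mem_biUnion.mpr ⟨(J, W), ?_, ?_⟩
    · simp [hidxSet, hJne, hWcard]
    · simp only [hevent, mem_filter, mem_univ, true_and]
      intro i t
      by_cases hi : i ∈ J
      · simp only [hi, if_pos]
        by_cases hf : ω i t ∈ F i
        · exact Finset.mem_union_right _ hf
        · refine Finset.mem_union_left _ (hWsub ?_)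
          refine Finset.mem_biUnion.mpr ⟨i, hi, ?_⟩
          simp [hT, hf]
      · simp [hi]
  calc _ ≤ (idxSet.biUnion event).card := Finset.card_le_card hsub
    _ ≤ ∑ p ∈ idxSet, (event p).card := Finset.card_biUnion_le
    _ ≤ ∑ p ∈ idxSet, ((p.1.card+1)^(r*p.1.card) * (k+r)^(r*(k-p.1.card))) := by
        refine Finset.sum_le_sum fun p hp => ?_
        rw [hidxSet, mem_filter] at hp
        obtain ⟨-, hne, hWc⟩ := hp
        rw [hevent]
        rw [event_card]
        have hb : ∀ i : Fin k,
            ((if i ∈ p.1 then p.2 ∪ F i else univ).card) ^ r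
            ≤ (if i ∈ p.1 then (p.1.card+1) else (k+r)) ^ r := by
          intro i
          by_cases hi : i ∈ p.1
          · simp only [hi, if_pos]
            refine Nat.pow_le_pow_left ?_ r
            calc (p.2 ∪ F i).card ≤ p.2.card + (F i).card := Finset.card_union_le _ _
              _ ≤ p.1.card + 1 := by rw [hWc, hF i]; have := hne.card_pos; omega
          · simp [hi, Finset.card_univ]
        have h1 : ∏ i ∈ p.1, (if i ∈ p.1 then (p.1.card+1) else (k+r)) ^ r
            = (p.1.card+1)^(r*p.1.card) := by
          rw [Finset.prod_congr rfl (fun i hi => by rw [if_pos hi]), Finset.prod_const,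
            ← pow_mul, mul_comm]
        have h2 : ∏ i ∈ p.1ᶜ, (if i ∈ p.1 then (p.1.card+1) else (k+r)) ^ r
            = (k+r)^(r*(k-p.1.card)) := by
          rw [Finset.prod_congr rfl (fun i hi => by rw [if_neg (Finset.mem_compl.mp hi)]),
            Finset.prod_const, ← pow_mul, Finset.card_compl, Fintype.card_fin, mul_comm]
        calc ∏ i : Fin k, ((if i ∈ p.1 then p.2 ∪ F i else univ).card) ^ r
            ≤ ∏ i : Fin k, (if i ∈ p.1 then (p.1.card+1) else (k+r)) ^ r :=
              Finset.prod_le_prod' (fun i _ => hb i)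
          _ = (p.1.card+1)^(r*p.1.card) * (k+r)^(r*(k-p.1.card)) := by
              rw [← Finset.prod_mul_prod_compl p.1, h1, h2]
    _ ≤ _ := by
        have hmaps : ∀ p ∈ idxSet, p.1.card ∈ Finset.Icc 1 k := by
          intro p hp
          rw [hidxSet, mem_filter] at hp
          rw [Finset.mem_Icc]
          exact ⟨hp.2.1.card_pos, (Finset.card_le_univ _).trans (by simp)⟩
        rw [← Finset.sum_fiberwise_of_maps_to (g := fun p : Idx => p.1.card) hmaps
          (f := fun p => (p.1.card+1)^(r*p.1.card) * (k+r)^(r*(k-p.1.card)))]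
        refine Finset.sum_le_sum fun j hj => ?_
        have hfib : ∀ p ∈ idxSet.filter (fun p => p.1.card = j),
            (p.1.card+1)^(r*p.1.card) * (k+r)^(r*(k-p.1.card))
            = (j+1)^(r*j) * (k+r)^(r*(k-j)) := by
          intro p hp
          rw [mem_filter] at hp
          rw [hp.2]
        rw [Finset.sum_congr rfl hfib, Finset.sum_const, smul_eq_mul]
        refine Nat.mul_le_mul_right _ ?_
        have hsubP : idxSet.filter (fun p => p.1.card = j)
            ⊆ (univ.powersetCard j) ×ˢ (univ.powersetCard (j-1)) := by
          intro p hp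
          rw [mem_filter, hidxSet, mem_filter] at hp
          obtain ⟨⟨-, hne, hWc⟩, hcard⟩ := hp
          rw [Finset.mem_product, Finset.mem_powersetCard, Finset.mem_powersetCard]
          exact ⟨⟨Finset.subset_univ _, hcard⟩, ⟨Finset.subset_univ _, by omega⟩⟩
        calc (idxSet.filter (fun p => p.1.card = j)).card
            ≤ ((univ.powersetCard j) ×ˢ (univ.powersetCard (j-1))).card :=
              Finset.card_le_card hsubP
          _ = k.choose j * (k+r).choose (j-1) := by
              rw [Finset.card_product, Finset.card_powersetCard, Finset.card_powersetCard]
              simp [Fintype.card_fin]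

/-- For `k` sufficiently large and `7 log k ≤ r ≤ k`: if `S₁, …, S_k` are random subsets
of `[k+r]`, each given by `r` independent uniform samples with replacement (an outcome is
`ω : Fin k → Fin r → Fin (k+r)`, all `(k+r)^(r·k)` outcomes equally likely), and
`F₁, …, F_k ⊆ [k+r]` are fixed sets of size two, then the probability that
`{S₁ \ F₁, …, S_k \ F_k}` has no transversal is at most `k^(1 - r/5)`. -/
theorem prob_no_transversal_le :
    ∃ k₀ : ℕ, ∀ k r : ℕ, k₀ ≤ k → 7 * Real.log k ≤ (r : ℝ) → r ≤ k →
      ∀ F : Fin k → Finset (Fin (k + r)), (∀ i, (F i).card = 2) →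
        (Nat.card {ω : Fin k → Fin r → Fin (k + r) //
            ¬ HasTransversal (fun i => Finset.image (ω i) Finset.univ \ F i)} : ℝ) /
          ((k + r : ℕ) : ℝ) ^ (r * k) ≤
        (k : ℝ) ^ ((1 : ℝ) - (r : ℝ) / 5) := by

  refine ⟨2^150, fun k r hk hr7 hrk F hF => ?_⟩
  have hkpos : 0 < k := lt_of_lt_of_le (by positivity) hk
  have hk0 : (0:ℝ) < k := by exact_mod_cast hkpos
  have hL103 : (103:ℝ) ≤ Real.log k := log_ge_103 hk
  have hpow0 : (0:ℝ) < ((k + r : ℕ) : ℝ) ^ (r * k) := by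
    have : (0:ℝ) < ((k + r : ℕ) : ℝ) := by
      have : 0 < k + r := by omega
      exact_mod_cast this
    positivity
  rw [div_le_iff₀ hpow0]
  have hmul : ∀ j ∈ Finset.Icc 1 k,
      ((k.choose j * (k+r).choose (j-1) * ((j+1)^(r*j) * (k+r)^(r*(k-j))) : ℕ) : ℝ)
        ≤ ((k + r : ℕ) : ℝ) ^ (r * k) * (k:ℝ) ^ (-((r:ℝ)/5)) := by
    intro j hj
    rw [Finset.mem_Icc] at hj
    have hperj := perj k r j hk hr7 hrk hj.1 hj.2
    have hstep : ((k.choose j * (k+r).choose (j-1) * ((j+1)^(r*j) * (k+r)^(r*(k-j))) : ℕ) : ℝ)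
        = ((k.choose j : ℝ) * ((k+r).choose (j-1) : ℝ) * ((j:ℝ)+1)^(r*j))
          * ((k:ℝ)+(r:ℝ))^(r*(k-j)) := by push_cast; ring
    rw [hstep]
    have h2 : ((k.choose j : ℝ) * ((k+r).choose (j-1) : ℝ) * ((j:ℝ)+1)^(r*j))
          * ((k:ℝ)+(r:ℝ))^(r*(k-j))
        ≤ (((k:ℝ)+(r:ℝ))^(r*j) * (k:ℝ) ^ (-((r:ℝ)/5))) * ((k:ℝ)+(r:ℝ))^(r*(k-j)) := by
      refine mul_le_mul_of_nonneg_right hperj ?_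
      positivity
    refine h2.trans (le_of_eq ?_)
    have he : r*j + r*(k-j) = r*k := by
      rw [← Nat.mul_add]
      congr 1
      omega
    rw [show ((k + r : ℕ) : ℝ) = ((k:ℝ)+(r:ℝ)) by push_cast; ring, ← he, pow_add]
    ring
  calc (Nat.card {ω : Fin k → Fin r → Fin (k + r) //
            ¬ HasTransversal (fun i => Finset.image (ω i) Finset.univ \ F i)} : ℝ)
      ≤ ((∑ j ∈ Finset.Icc 1 k,
          k.choose j * (k+r).choose (j-1) * ((j+1)^(r*j) * (k+r)^(r*(k-j))) : ℕ) : ℝ) := by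
        exact_mod_cast count_bad k r F hF
    _ = ∑ j ∈ Finset.Icc 1 k,
          ((k.choose j * (k+r).choose (j-1) * ((j+1)^(r*j) * (k+r)^(r*(k-j))) : ℕ) : ℝ) := by
        exact Nat.cast_sum _ _
    _ ≤ ∑ _j ∈ Finset.Icc 1 k, ((k + r : ℕ) : ℝ) ^ (r * k) * (k:ℝ) ^ (-((r:ℝ)/5)) :=
        Finset.sum_le_sum hmul
    _ = (k:ℝ) * (((k + r : ℕ) : ℝ) ^ (r * k) * (k:ℝ) ^ (-((r:ℝ)/5))) := by
        rw [Finset.sum_const, Nat.card_Icc, nsmul_eq_mul]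
        norm_num
    _ = (k : ℝ) ^ ((1 : ℝ) - (r : ℝ) / 5) * ((k + r : ℕ) : ℝ) ^ (r * k) := by
        have h3 : (k:ℝ) ^ ((1 : ℝ) - (r : ℝ) / 5)
            = (k:ℝ) ^ (1:ℝ) * (k:ℝ) ^ (-((r:ℝ)/5)) := by
          rw [← Real.rpow_add hk0]; ring_nf
        rw [h3, Real.rpow_one]; ring
end

section
/- Let k, r, j be positive integers with r ≤ k and j ≤ k, and let S₁,…,S_k be independent random subsets of [k+r], each formed by r independent uniform samples with replacement from [k+r], and F₁,…,F_k fixed two-element subsets of [k+r]. Then the probability that there exists J ⊆ [k] of size j with |⋃_{i∈J}(S_i \ F_i)| < j is at most C(k+r, j)² · ((j+2)/(k+r))^{r·j}. -/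
/-- Union bound for the failure of Hall's condition at size `j`: if `S₁, …, S_k` are
random subsets of `[k+r]`, each given by `r` independent uniform samples with replacement
(an outcome is `ω : Fin k → Fin r → Fin (k+r)`, all `(k+r)^(r·k)` outcomes equally
likely), and `F₁, …, F_k ⊆ [k+r]` are fixed two-element sets, then the probability that
some `J ⊆ [k]` of size `j` has `|⋃_{i ∈ J} (S_i \ F_i)| < j` is at most
`C(k+r, j)² · ((j+2)/(k+r))^(r·j)`. -/
theorem prob_hall_violation_le (k r j : ℕ) (hk : 0 < k) (hr : 0 < r) (hj : 0 < j)
    (hrk : r ≤ k) (hjk : j ≤ k) (F : Fin k → Finset (Fin (k + r)))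
    (hF : ∀ i, (F i).card = 2) :
    (Nat.card {ω : Fin k → Fin r → Fin (k + r) //
        ∃ J : Finset (Fin k), J.card = j ∧
          (J.biUnion (fun i => Finset.image (ω i) Finset.univ \ F i)).card < j} : ℝ) /
      ((k + r : ℕ) : ℝ) ^ (r * k) ≤
    ((k + r).choose j : ℝ) ^ 2 * (((j : ℝ) + 2) / ((k : ℝ) + r)) ^ (r * j) := by
  classical
  set P : (Fin k → Fin r → Fin (k + r)) → Prop := fun ω =>
    ∃ J : Finset (Fin k), J.card = j ∧
      (J.biUnion (fun i => Finset.image (ω i) Finset.univ \ F i)).card < j with hPdef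
  have hNatcard : Nat.card {ω : Fin k → Fin r → Fin (k + r) // P ω}
      = (Finset.univ.filter P).card := by
    rw [Nat.card_eq_fintype_card, Fintype.card_subtype]
  -- boxes
  set E : Finset (Fin k) → Finset (Fin (k + r)) → Finset (Fin k → Fin r → Fin (k + r)) :=
    fun J S => Fintype.piFinset (fun i =>
      if i ∈ J then Fintype.piFinset (fun _ : Fin r => S ∪ F i) else Finset.univ) with hEdef
  set A : Finset (Finset (Fin k) × Finset (Fin (k + r))) :=
    (Finset.univ.powersetCard j) ×ˢ (Finset.univ.powersetCard j) with hAdef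
  -- subset claim
  have hsub : Finset.univ.filter P ⊆ A.biUnion (fun p => E p.1 p.2) := by
    intro ω hω
    rw [Finset.mem_filter] at hω
    obtain ⟨J, hJcard, hU⟩ := hω.2
    set U := J.biUnion (fun i => Finset.image (ω i) Finset.univ \ F i) with hUdef
    obtain ⟨S, hUS, -, hScard⟩ := Finset.exists_subsuperset_card_eq
      (U.subset_univ) (le_of_lt hU) (by simp [Finset.card_univ]; omega)
    rw [Finset.mem_biUnion]
    refine ⟨(J, S), ?_, ?_⟩
    · simp [hAdef, Finset.mem_powersetCard_univ, hJcard, hScard]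
    · simp only [hEdef, Fintype.mem_piFinset]
      intro i
      by_cases hi : i ∈ J
      · simp only [hi, if_true, Fintype.mem_piFinset]
        intro t
        by_cases hf : ω i t ∈ F i
        · exact Finset.mem_union_right _ hf
        · refine Finset.mem_union_left _ (hUS ?_)
          rw [hUdef, Finset.mem_biUnion]
          exact ⟨i, hi, Finset.mem_sdiff.2 ⟨Finset.mem_image_of_mem _ (Finset.mem_univ t), hf⟩⟩
      · simp [hi]
  -- card of each box
  have hbox : ∀ p ∈ A, (E p.1 p.2).card ≤ (j + 2) ^ (r * j) * (k + r) ^ (r * (k - j)) := by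
    rintro ⟨J, S⟩ hp
    simp only [hAdef, Finset.mem_product, Finset.mem_powersetCard_univ] at hp
    obtain ⟨hJ, hS⟩ := hp
    rw [hEdef]
    rw [Fintype.card_piFinset]
    calc ∏ i, (if i ∈ J then Fintype.piFinset (fun _ : Fin r => S ∪ F i) else
            (Finset.univ : Finset (Fin r → Fin (k + r)))).card
        = (∏ i ∈ J, (if i ∈ J then Fintype.piFinset (fun _ : Fin r => S ∪ F i) else
            (Finset.univ : Finset (Fin r → Fin (k + r)))).card) *
          ∏ i ∈ Jᶜ, (if i ∈ J then Fintype.piFinset (fun _ : Fin r => S ∪ F i) else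
            (Finset.univ : Finset (Fin r → Fin (k + r)))).card :=
          (Finset.prod_mul_prod_compl J _).symm
      _ ≤ ((j + 2) ^ r) ^ j * ((k + r) ^ r) ^ (k - j) := by
          refine Nat.mul_le_mul ?_ ?_
          · calc ∏ i ∈ J, (if i ∈ J then Fintype.piFinset (fun _ : Fin r => S ∪ F i) else
                  (Finset.univ : Finset (Fin r → Fin (k + r)))).card
                ≤ ∏ _i ∈ J, (j + 2) ^ r := by
                  refine Finset.prod_le_prod' fun i hi => ?_
                  rw [if_pos hi, Fintype.card_piFinset]
                  simp only [Finset.prod_const, Finset.card_univ, Fintype.card_fin]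
                  refine Nat.pow_le_pow_left ?_ r
                  calc (S ∪ F i).card ≤ S.card + (F i).card := Finset.card_union_le _ _
                    _ = j + 2 := by rw [hS, hF i]
              _ = ((j + 2) ^ r) ^ j := by rw [Finset.prod_const, hJ]
          · calc ∏ i ∈ Jᶜ, (if i ∈ J then Fintype.piFinset (fun _ : Fin r => S ∪ F i) else
                  (Finset.univ : Finset (Fin r → Fin (k + r)))).card
                = ∏ _i ∈ Jᶜ, (k + r) ^ r := by
                  refine Finset.prod_congr rfl fun i hi => ?_
                  rw [if_neg (Finset.mem_compl.1 hi), Finset.card_univ]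
                  simp [Fintype.card_fun]
              _ ≤ ((k + r) ^ r) ^ (k - j) := by
                  rw [Finset.prod_const, Finset.card_compl, hJ, Fintype.card_fin]
      _ = (j + 2) ^ (r * j) * (k + r) ^ (r * (k - j)) := by
          rw [← pow_mul, ← pow_mul, Nat.mul_comm r j, Nat.mul_comm r (k - j)]
  -- total count
  have htotal : (Finset.univ.filter P).card ≤
      (k + r).choose j * (k + r).choose j * ((j + 2) ^ (r * j) * (k + r) ^ (r * (k - j))) := by
    calc (Finset.univ.filter P).card ≤ (A.biUnion (fun p => E p.1 p.2)).card :=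
          Finset.card_le_card hsub
      _ ≤ ∑ p ∈ A, (E p.1 p.2).card := Finset.card_biUnion_le
      _ ≤ ∑ _p ∈ A, ((j + 2) ^ (r * j) * (k + r) ^ (r * (k - j))) := Finset.sum_le_sum hbox
      _ = A.card * ((j + 2) ^ (r * j) * (k + r) ^ (r * (k - j))) := by
          rw [Finset.sum_const, smul_eq_mul]
      _ ≤ (k + r).choose j * (k + r).choose j *
            ((j + 2) ^ (r * j) * (k + r) ^ (r * (k - j))) := by
          refine Nat.mul_le_mul_right _ ?_
          rw [hAdef, Finset.card_product, Finset.card_powersetCard, Finset.card_powersetCard,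
            Finset.card_univ, Finset.card_univ, Fintype.card_fin, Fintype.card_fin]
          exact Nat.mul_le_mul_right _ (Nat.choose_le_choose j (Nat.le_add_right k r))
  -- pass to the reals
  rw [hNatcard] at *
  have hexp : r * k = r * j + r * (k - j) := by
    rw [← Nat.mul_add, Nat.add_sub_cancel' hjk]
  have hn0 : (0 : ℝ) < ((k + r : ℕ) : ℝ) := by positivity
  have hcast : ((Finset.univ.filter P).card : ℝ) ≤
      ((k + r).choose j : ℝ) * ((k + r).choose j) *
        (((j : ℝ) + 2) ^ (r * j) * ((k + r : ℕ) : ℝ) ^ (r * (k - j))) := by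
    exact_mod_cast htotal
  have hkr : ((k : ℝ) + r) = ((k + r : ℕ) : ℝ) := by push_cast; ring
  rw [hkr, div_pow, ← mul_div_assoc, div_le_div_iff₀ (by positivity) (by positivity)]
  calc ((Finset.univ.filter P).card : ℝ) * ((k + r : ℕ) : ℝ) ^ (r * j)
      ≤ (((k + r).choose j : ℝ) * ((k + r).choose j) *
          (((j : ℝ) + 2) ^ (r * j) * ((k + r : ℕ) : ℝ) ^ (r * (k - j)))) *
          ((k + r : ℕ) : ℝ) ^ (r * j) := by
        refine mul_le_mul_of_nonneg_right hcast (by positivity)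
    _ = ((k + r).choose j : ℝ) ^ 2 * ((j : ℝ) + 2) ^ (r * j) * ((k + r : ℕ) : ℝ) ^ (r * k) := by
        rw [hexp, pow_add]; ring
end

section
/- Let H be a simple graph on vertex set {1,…,n} with maximum degree at most d ≥ 1. Suppose events A₁,…,A_n in a probability space satisfy P(A_i) ≤ 1/(4d) for all i, and each A_i is mutually independent of the collection {A_j : j not adjacent to i in H}. Then P(complement of A₁ ∩ … ∩ complement of A_n) > 0. -/
/-!
Write `avoid A S` for the event that no `A j` with `j ∈ S` occurs. By strong induction on `S`,
every `A i` with `i ∉ S` has conditional probability at most `1/(2d)` given `avoid A S`: split `S`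
into the at most `d` neighbours `N` of `i` and the rest `F`; by the induction hypothesis and a
union bound, avoiding `N` as well costs at most half of `avoid A F`, while `A i` is independent
of `avoid A F`, so `P(A i ∩ avoid A S) ≤ P(A i) · P(avoid A F) ≤ (1/(4d)) · 2 P(avoid A S)`.
Chaining the conditional bounds gives `P(avoid A S) ≥ (1 - 1/(2d))^|S| > 0`.
-/

open MeasureTheory ProbabilityTheory Finset

namespace LovaszLocalLemma

variable {Ω ι : Type*} {A : ι → Set Ω}

def avoid (A : ι → Set Ω) (S : Finset ι) : Set Ω := ⋂ j ∈ S, (A j)ᶜ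

@[simp] lemma avoid_empty : avoid A ∅ = Set.univ := by simp [avoid]

lemma avoid_union [DecidableEq ι] (S T : Finset ι) :
    avoid A (S ∪ T) = avoid A S ∩ avoid A T :=
  Finset.set_biInter_inter S T _

lemma avoid_subset_avoid {S T : Finset ι} (h : S ⊆ T) : avoid A T ⊆ avoid A S :=
  Set.biInter_subset_biInter_left (by exact_mod_cast h)

variable [MeasurableSpace Ω] {μ : Measure Ω}

lemma measureReal_avoid_le_add_sum [IsFiniteMeasure μ] [DecidableEq ι] (S T : Finset ι) :
    μ.real (avoid A T) ≤ μ.real (avoid A (S ∪ T)) + ∑ j ∈ S, μ.real (A j ∩ avoid A T) := by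
  have hcover : avoid A T ⊆ avoid A (S ∪ T) ∪ ⋃ j ∈ S, A j ∩ avoid A T := by
    intro x hx
    by_cases h : ∃ j ∈ S, x ∈ A j
    · obtain ⟨j, hj, hxj⟩ := h
      exact Or.inr (Set.mem_biUnion hj ⟨hxj, hx⟩)
    · push Not at h
      refine Or.inl ?_
      rw [avoid_union]
      exact ⟨Set.mem_iInter₂.mpr h, hx⟩
  calc μ.real (avoid A T) ≤ μ.real (avoid A (S ∪ T) ∪ ⋃ j ∈ S, A j ∩ avoid A T) :=
        measureReal_mono hcover
    _ ≤ _ := (measureReal_union_le _ _).trans (by gcongr; exact measureReal_biUnion_finset_le _ _)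

lemma one_sub_pow_le_measureReal_avoid [IsProbabilityMeasure μ] [DecidableEq ι] {q : ℝ}
    (hq : q ≤ 1) (h : ∀ S : Finset ι, ∀ i ∉ S, μ.real (A i ∩ avoid A S) ≤ q * μ.real (avoid A S))
    (S : Finset ι) : (1 - q) ^ #S ≤ μ.real (avoid A S) := by
  induction S using Finset.induction_on with
  | empty => simp
  | insert i S hi ih =>
    have hsplit := measureReal_avoid_le_add_sum (A := A) (μ := μ) {i} S
    rw [← insert_eq, sum_singleton] at hsplit
    rw [card_insert_of_notMem hi, pow_succ]
    nlinarith [h S i hi]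

lemma measureReal_inter_avoid_eq_mul (H : SimpleGraph ι) {i : ι}
    (hind : Indep (MeasurableSpace.generateFrom {A i})
      (MeasurableSpace.generateFrom {s | ∃ j, ¬ H.Adj i j ∧ j ≠ i ∧ s = A j}) μ)
    {F : Finset ι} (hF : ∀ j ∈ F, ¬ H.Adj i j ∧ j ≠ i) :
    μ.real (A i ∩ avoid A F) = μ.real (A i) * μ.real (avoid A F) := by
  have hAi : MeasurableSet[MeasurableSpace.generateFrom {A i}] (A i) :=
    MeasurableSpace.measurableSet_generateFrom rfl
  have hAF : MeasurableSet[MeasurableSpace.generateFrom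
      {s | ∃ j, ¬ H.Adj i j ∧ j ≠ i ∧ s = A j}] (avoid A F) :=
    Finset.measurableSet_biInter F fun j hj => MeasurableSet.compl
      (MeasurableSpace.measurableSet_generateFrom ⟨j, (hF j hj).1, (hF j hj).2, rfl⟩)
  simp only [Measure.real, (Indep_iff _ _ μ).mp hind _ _ hAi hAF, ENNReal.toReal_mul]

lemma measureReal_avoid_le_two_mul [IsFiniteMeasure μ] [DecidableEq ι] {d : ℕ} {N F : Finset ι}
    (hN : #N ≤ d)
    (h : ∀ j ∈ N, μ.real (A j ∩ avoid A F) ≤ (2 * d : ℝ)⁻¹ * μ.real (avoid A F)) :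
    μ.real (avoid A F) ≤ 2 * μ.real (avoid A (N ∪ F)) := by
  set x := μ.real (avoid A F)
  have hsum : ∑ j ∈ N, μ.real (A j ∩ avoid A F) ≤ x / 2 :=
    calc ∑ j ∈ N, μ.real (A j ∩ avoid A F) ≤ #N * ((2 * d : ℝ)⁻¹ * x) := by
          simpa using sum_le_sum h
      _ ≤ d * ((2 * d : ℝ)⁻¹ * x) := by gcongr
      _ ≤ x / 2 := by
          rcases eq_or_ne d 0 with rfl | hd
          · simp [x, div_nonneg]
          · exact le_of_eq (by field_simp)
  linarith [measureReal_avoid_le_add_sum (μ := μ) (A := A) N F]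

theorem measureReal_inter_avoid_le [IsProbabilityMeasure μ] [Fintype ι] [DecidableEq ι]
    {H : SimpleGraph ι} [DecidableRel H.Adj] {d : ℕ} (hH : H.maxDegree ≤ d)
    (hp : ∀ i, μ.real (A i) ≤ (4 * d : ℝ)⁻¹)
    (hind : ∀ i, Indep (MeasurableSpace.generateFrom {A i})
      (MeasurableSpace.generateFrom {s | ∃ j, ¬ H.Adj i j ∧ j ≠ i ∧ s = A j}) μ)
    (S : Finset ι) : ∀ i ∉ S, μ.real (A i ∩ avoid A S) ≤ (2 * d : ℝ)⁻¹ * μ.real (avoid A S) := by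
  induction S using Finset.strongInduction with
  | H S ih =>
  intro i hi
  set N := S.filter (H.Adj i)
  set F := S.filter (¬ H.Adj i ·)
  have hNF : N ∪ F = S := filter_union_filter_not_eq _ _
  have hN : #N ≤ d := by
    have hsub : N ⊆ H.neighborFinset i := fun j hj => by simpa using (mem_filter.1 hj).2
    exact (card_le_card hsub).trans ((H.degree_le_maxDegree i).trans hH)
  have hF : μ.real (avoid A F) ≤ 2 * μ.real (avoid A S) := by
    rw [← hNF]
    refine measureReal_avoid_le_two_mul hN fun j hj => ih F ?_ j ?_
    · exact filter_ssubset.2 ⟨j, (mem_filter.1 hj).1, by simpa using (mem_filter.1 hj).2⟩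
    · exact fun hjF => (mem_filter.1 hjF).2 (mem_filter.1 hj).2
  have hindep : μ.real (A i ∩ avoid A F) = μ.real (A i) * μ.real (avoid A F) :=
    measureReal_inter_avoid_eq_mul H (hind i) fun j hj =>
      ⟨(mem_filter.1 hj).2, fun hji => hi (hji ▸ (mem_filter.1 hj).1)⟩
  calc μ.real (A i ∩ avoid A S) ≤ μ.real (A i ∩ avoid A F) :=
        measureReal_mono (Set.inter_subset_inter_right _ (avoid_subset_avoid (filter_subset _ _)))
    _ = μ.real (A i) * μ.real (avoid A F) := hindep
    _ ≤ (4 * d : ℝ)⁻¹ * (2 * μ.real (avoid A S)) := by gcongr; exact hp i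
    _ = (2 * d : ℝ)⁻¹ * μ.real (avoid A S) := by ring

end LovaszLocalLemma

open LovaszLocalLemma in
theorem lovasz_local_lemma_general {Ω : Type} [MeasurableSpace Ω] (μ : Measure Ω)
    [IsProbabilityMeasure μ] (n d : ℕ) (hd : 1 ≤ d) (H : SimpleGraph (Fin n))
    [DecidableRel H.Adj] (hH : H.maxDegree ≤ d) (A : Fin n → Set Ω)
    (hp : ∀ i, μ (A i) ≤ 1 / (4 * d))
    (hind : ∀ i : Fin n,
      Indep (MeasurableSpace.generateFrom {A i})
        (MeasurableSpace.generateFrom {s | ∃ j : Fin n, ¬ H.Adj i j ∧ j ≠ i ∧ s = A j})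
        μ) :
    0 < μ (⋂ i, (A i)ᶜ) := by
  have hd' : (1 : ℝ) ≤ d := by exact_mod_cast hd
  have hp' : ∀ i, μ.real (A i) ≤ (4 * d : ℝ)⁻¹ := fun i => by
    simpa [Measure.real] using ENNReal.toReal_mono (by simp; omega) (hp i)
  have hq : (2 * d : ℝ)⁻¹ < 1 := inv_lt_one_of_one_lt₀ (by linarith)
  have hpos : 0 < μ.real (avoid A univ) :=
    (pow_pos (by linarith) _).trans_le <|
      one_sub_pow_le_measureReal_avoid hq.le (measureReal_inter_avoid_le hH hp' hind) univ
  simpa [avoid] using (ENNReal.toReal_pos_iff.1 hpos).1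

/-- Symmetric Lovász Local Lemma with dependency graph `H` on `{1,…,n}`: if each event
`A i` has probability at most `1/(4d)`, `H` has maximum degree at most `d`, and each
`A i` is mutually independent of the collection of events at non-adjacent indices, then
with positive probability none of the events occurs. -/
theorem lovasz_local_lemma {Ω : Type} [MeasurableSpace Ω] (μ : Measure Ω)
    [IsProbabilityMeasure μ] (n d : ℕ) (hd : 1 ≤ d) (H : SimpleGraph (Fin n))
    [DecidableRel H.Adj] (hH : H.maxDegree ≤ d) (A : Fin n → Set Ω)
    (hmeas : ∀ i, MeasurableSet (A i)) (hp : ∀ i, μ (A i) ≤ 1 / (4 * d))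
    (hind : ∀ i : Fin n,
      Indep (MeasurableSpace.generateFrom {A i})
        (MeasurableSpace.generateFrom {s | ∃ j : Fin n, ¬ H.Adj i j ∧ j ≠ i ∧ s = A j})
        μ) :
    0 < μ (⋂ i, (A i)ᶜ) :=
  lovasz_local_lemma_general μ n d hd H hH A hp hind
end

section
/- Let D be a directed multigraph in which every vertex has indegree at most c. Then the edges of D can be partitioned into at most 3c directed star forests (forests of stars with all edges directed away from the star centres), i.e., dst(D) ≤ 3c. -/
open Finset

lemma exists_three_coloring {V : Type} [Fintype V] [DecidableEq V]
    (p : V → Option V) (hp : ∀ v, p v ≠ some v) :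
    ∃ col : V → Fin 3, ∀ v w, p v = some w → col v ≠ col w := by
  classical
  suffices h : ∀ S : Finset V, ∃ col : V → Fin 3,
      ∀ v ∈ S, ∀ w ∈ S, p v = some w → col v ≠ col w by
    obtain ⟨col, hcol⟩ := h univ
    exact ⟨col, fun v w hvw => hcol v (mem_univ v) w (mem_univ w) hvw⟩
  intro S
  induction S using Finset.strongInduction with
  | _ S ih =>
    rcases S.eq_empty_or_nonempty with rfl | hS
    · exact ⟨fun _ => 0, by simp⟩
    -- find v ∈ S with at most one preimage in S
    have hv : ∃ v ∈ S, (S.filter (fun u => p u = some v)).card ≤ 1 := by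
      by_contra hcon
      push_neg at hcon
      have hdisj : (S : Set V).PairwiseDisjoint (fun v => S.filter (fun u => p u = some v)) := by
        intro a ha b hb hab
        refine Finset.disjoint_left.2 ?_
        intro u hu hu'
        simp only [mem_filter] at hu hu'
        exact hab (by rw [hu.2] at hu'; exact (Option.some_inj.1 hu'.2))
      have hsum : ∑ v ∈ S, (S.filter (fun u => p u = some v)).card ≤ S.card := by
        rw [← Finset.card_biUnion hdisj]
        apply Finset.card_le_card
        intro u hu
        simp only [mem_biUnion, mem_filter] at hu
        exact hu.choose_spec.2.1
      have hsum2 : ∀ v ∈ S, 2 ≤ (S.filter (fun u => p u = some v)).card :=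
        fun v hv => hcon v hv
      have h2 : 2 * S.card ≤ ∑ v ∈ S, (S.filter (fun u => p u = some v)).card := by
        calc 2 * S.card = ∑ _v ∈ S, 2 := by rw [Finset.sum_const, smul_eq_mul, mul_comm]
        _ ≤ _ := Finset.sum_le_sum hsum2
      have := hS.card_pos
      omega
    obtain ⟨v, hvS, hpre⟩ := hv
    obtain ⟨col, hcol⟩ := ih (S.erase v) (Finset.erase_ssubset hvS)
    set F : Finset (Fin 3) :=
      (S.filter (fun u => p u = some v)).image col ∪ (p v).elim ∅ (fun w => {col w}) with hF
    have hFcard : F.card < 3 := by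
      have h1 : ((S.filter (fun u => p u = some v)).image col).card ≤ 1 :=
        le_trans (Finset.card_image_le) hpre
      have h2 : ((p v).elim ∅ (fun w => ({col w} : Finset (Fin 3)))).card ≤ 1 := by
        cases p v <;> simp
      calc F.card ≤ _ + _ := Finset.card_union_le _ _
        _ < 3 := by omega
    have hFc : Fᶜ.Nonempty := by
      rw [← Finset.card_pos, Finset.card_compl]
      simp only [Fintype.card_fin]
      omega
    obtain ⟨x, hx⟩ := hFc
    rw [Finset.mem_compl] at hx
    refine ⟨Function.update col v x, ?_⟩
    intro a ha b hb hab
    by_cases hav : a = v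
    · have hbv : b ≠ v := fun h => hp v (by rw [← hav, hab, h, hav])
      rw [hav, Function.update_self, Function.update_of_ne hbv]
      intro hcontra
      apply hx
      rw [hF]
      apply Finset.mem_union_right
      rw [← hav, hab]
      simp [hcontra]
    · by_cases hbv : b = v
      · subst hbv
        rw [Function.update_of_ne hav, Function.update_self]
        intro hcontra
        apply hx
        rw [hF]
        apply Finset.mem_union_left
        rw [← hcontra]
        exact Finset.mem_image_of_mem col (Finset.mem_filter.2 ⟨ha, hab⟩)
      · rw [Function.update_of_ne hav, Function.update_of_ne hbv]
        exact hcol a (Finset.mem_erase.2 ⟨hav, ha⟩) b (Finset.mem_erase.2 ⟨hbv, hb⟩) hab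

/-- A directed multigraph (edge type `E` with source and target maps, no loops) in which
every vertex has indegree at most `c` can be edge-partitioned into at most `3c` directed
star forests: each colour class has all targets distinct (each leaf has one incoming
edge) and no target of an edge is the source of an edge of the same class (edges point
away from star centres). Hence `dst(D) ≤ 3c`. -/
theorem dst_le_three_mul_indegree {V E : Type} [Fintype V] [Fintype E] [DecidableEq V]
    (src tgt : E → V) (hloop : ∀ e, src e ≠ tgt e) (c : ℕ)
    (hin : ∀ v : V, (Finset.univ.filter (fun e => tgt e = v)).card ≤ c) :
    ∃ f : E → Fin (3 * c),
      ∀ e₁ e₂ : E, f e₁ = f e₂ →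
        tgt e₁ ≠ src e₂ ∧ (e₁ ≠ e₂ → tgt e₁ ≠ tgt e₂) := by
  classical
  set ι := (Fintype.equivFin E) with hι
  set rank : E → ℕ :=
    fun e => (Finset.univ.filter (fun e' => tgt e' = tgt e ∧ ι e' < ι e)).card with hrank
  have rank_lt : ∀ e, rank e < c := by
    intro e
    have h1 : Finset.univ.filter (fun e' => tgt e' = tgt e ∧ ι e' < ι e)
        ⊆ (Finset.univ.filter (fun e' => tgt e' = tgt e)).erase e := by
      intro e' he'
      simp only [Finset.mem_filter, Finset.mem_erase, Finset.mem_univ, true_and] at *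
      exact ⟨fun h => by subst h; exact lt_irrefl _ he'.2, he'.1⟩
    have h2 := Finset.card_le_card h1
    have h3 : e ∈ Finset.univ.filter (fun e' => tgt e' = tgt e) := by simp
    have h4 := hin (tgt e)
    have h5 := Finset.card_erase_of_mem h3
    have h6 : 1 ≤ (Finset.univ.filter (fun e' => tgt e' = tgt e)).card :=
      Finset.card_pos.2 ⟨e, h3⟩
    simp only [hrank]
    omega
  have rank_mono : ∀ e₁ e₂, tgt e₁ = tgt e₂ → ι e₁ < ι e₂ → rank e₁ < rank e₂ := by
    intro e₁ e₂ ht hlt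
    apply Finset.card_lt_card
    rw [Finset.ssubset_iff_of_subset]
    · refine ⟨e₁, ?_, ?_⟩
      · simp [ht, hlt]
      · simp
    · intro e' he'
      simp only [Finset.mem_filter, Finset.mem_univ, true_and] at *
      exact ⟨he'.1.trans ht, he'.2.trans hlt⟩
  have rank_inj : ∀ e₁ e₂, tgt e₁ = tgt e₂ → rank e₁ = rank e₂ → e₁ = e₂ := by
    intro e₁ e₂ ht hr
    by_contra hne
    have hιne : ι e₁ ≠ ι e₂ := fun h => hne (ι.injective h)
    rcases lt_or_gt_of_ne hιne with h | h
    · exact absurd hr (Nat.ne_of_lt (rank_mono e₁ e₂ ht h))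
    · exact absurd hr.symm (Nat.ne_of_lt (rank_mono e₂ e₁ ht.symm h))
  set g : E → Fin c := fun e => ⟨rank e, rank_lt e⟩ with hg
  set p : Fin c → V → Option V :=
    fun i v => if h : ∃ e, g e = i ∧ tgt e = v then some (src h.choose) else none with hp
  have hp_nofix : ∀ i v, p i v ≠ some v := by
    intro i v
    simp only [hp]
    split
    · rename_i h
      intro hcontra
      have hsp := h.choose_spec
      exact hloop h.choose (by rw [hsp.2, Option.some_inj.1 hcontra])
    · simp
  have hp_edge : ∀ e, p (g e) (tgt e) = some (src e) := by
    intro e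
    have hex : ∃ e', g e' = g e ∧ tgt e' = tgt e := ⟨e, rfl, rfl⟩
    rw [hp]
    simp only [hex, dite_true]
    have hsp := hex.choose_spec
    have : hex.choose = e := rank_inj _ _ hsp.2 (congrArg Fin.val hsp.1)
    rw [this]
  choose col hcol using fun i => exists_three_coloring (p i) (hp_nofix i)
  refine ⟨fun e => finProdFinEquiv (col (g e) (tgt e), g e), ?_⟩
  intro e₁ e₂ hf
  have hpair := finProdFinEquiv.injective hf
  have hgeq : g e₁ = g e₂ := congrArg Prod.snd hpair
  have hceq : col (g e₁) (tgt e₁) = col (g e₂) (tgt e₂) := congrArg Prod.fst hpair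
  constructor
  · intro hts
    have h1 := hcol (g e₂) (tgt e₂) (src e₂) (hp_edge e₂)
    apply h1
    rw [← hceq, ← hts, hgeq]
  · intro hne hteq
    apply hne
    exact rank_inj _ _ hteq (congrArg Fin.val hgeq)
end

section
/- For every simple graph G, the incidence colouring number of G equals the directed star arboricity of the symmetric orientation of G: ι(G) = dst(S(G)). -/
/-- The incidences of `G`: pairs `(v, e)` with `v ∈ e`. -/
def Incidence {V : Type} (G : SimpleGraph V) : Type :=
  {p : V × G.edgeSet // p.1 ∈ (p.2 : Sym2 V)}

/-- `G` has an incidence colouring with `m` colours: incidences `(v,e)` and `(w,f)` get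
distinct colours whenever `v = w`, or `vw = e`, or `vw = f`. -/
def IncColorable {V : Type} (G : SimpleGraph V) (m : ℕ) : Prop :=
  ∃ c : Incidence G → Fin m,
    ∀ p q : Incidence G, p ≠ q →
      (p.1.1 = q.1.1 ∨ s(p.1.1, q.1.1) = (p.1.2 : Sym2 V) ∨
        s(p.1.1, q.1.1) = (q.1.2 : Sym2 V)) →
      c p ≠ c q

/-- The incidence colouring number `ι(G)`. -/
noncomputable def incidenceChromaticNumber {V : Type} (G : SimpleGraph V) : ℕ∞ :=
  ⨅ m ∈ {m : ℕ | IncColorable G m}, (m : ℕ∞)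

/-- The edges of the symmetric orientation `S(G)` of `G`: each edge `uv` is replaced by
the two directed edges `(u,v)` and `(v,u)`. -/
def SymOrientEdge {V : Type} (G : SimpleGraph V) : Type :=
  {p : V × V // G.Adj p.1 p.2}

/-- The edges of `S(G)` can be partitioned into `m` directed star forests: within a
colour class all targets are distinct, and no target of an edge is the source of an
edge of the same class (edges point away from star centres). -/
def DSFDecomposable {V : Type} (G : SimpleGraph V) (m : ℕ) : Prop :=
  ∃ f : SymOrientEdge G → Fin m,
    ∀ d₁ d₂ : SymOrientEdge G, f d₁ = f d₂ →
      d₁.1.2 ≠ d₂.1.1 ∧ (d₁ ≠ d₂ → d₁.1.2 ≠ d₂.1.2)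

/-- The directed star arboricity of the symmetric orientation `S(G)`. -/
noncomputable def dstSymOrient {V : Type} (G : SimpleGraph V) : ℕ∞ :=
  ⨅ m ∈ {m : ℕ | DSFDecomposable G m}, (m : ℕ∞)

/-- Turn a directed edge `(u,v)` into the incidence `(v, uv)`. -/
def toInc {V : Type} {G : SimpleGraph V} (d : SymOrientEdge G) : Incidence G :=
  ⟨(d.1.2, ⟨s(d.1.1, d.1.2), G.mem_edgeSet.mpr d.2⟩), Sym2.mem_mk_right _ _⟩

/-- Turn an incidence `(v, e)` with `e = uv` into the directed edge `(u,v)`. -/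
noncomputable def toEdge {V : Type} {G : SimpleGraph V} (p : Incidence G) :
    SymOrientEdge G :=
  ⟨(Sym2.Mem.other p.2, p.1.1), by
    have h : s(p.1.1, Sym2.Mem.other p.2) = (p.1.2 : Sym2 V) := Sym2.other_spec p.2
    have h2 : G.Adj p.1.1 (Sym2.Mem.other p.2) := by
      rw [← SimpleGraph.mem_edgeSet, h]; exact p.1.2.2
    exact h2.symm⟩

lemma toEdge_injective {V : Type} {G : SimpleGraph V} :
    Function.Injective (toEdge (G := G)) := by
  intro p q h
  have h1 : Sym2.Mem.other p.2 = Sym2.Mem.other q.2 := congrArg (fun d => d.1.1) h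
  have h2 : p.1.1 = q.1.1 := congrArg (fun d => d.1.2) h
  have he : (p.1.2 : Sym2 V) = (q.1.2 : Sym2 V) := by
    rw [← Sym2.other_spec p.2, ← Sym2.other_spec q.2, h1, h2]
  exact Subtype.ext (Prod.ext h2 (Subtype.ext he))

lemma inc_iff_dsf {V : Type} (G : SimpleGraph V) (m : ℕ) :
    IncColorable G m ↔ DSFDecomposable G m := by
  constructor
  · rintro ⟨c, hc⟩
    refine ⟨c ∘ toInc, fun d₁ d₂ hf => ?_⟩
    constructor
    · intro h
      refine hc (toInc d₁) (toInc d₂) ?_ ?_ hf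
      · intro he
        have h12 : d₁.1.2 = d₂.1.2 := congrArg (fun p => p.1.1) he
        exact d₂.2.ne (h.symm.trans h12)
      · right; right
        show s(d₁.1.2, d₂.1.2) = s(d₂.1.1, d₂.1.2)
        rw [h]
    · intro hne h
      refine hc (toInc d₁) (toInc d₂) ?_ (Or.inl h) hf
      intro he
      have hedge : (s(d₁.1.1, d₁.1.2) : Sym2 V) = s(d₂.1.1, d₂.1.2) :=
        congrArg (fun p => (p.1.2 : Sym2 V)) he
      rcases Sym2.eq_iff.mp hedge with ⟨ha, hb⟩ | ⟨ha, hb⟩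
      · exact hne (Subtype.ext (Prod.ext ha hb))
      · exact d₁.2.ne (ha.trans h.symm)
  · rintro ⟨f, hf⟩
    refine ⟨f ∘ toEdge, fun p q hpq hconf heq => ?_⟩
    have A := hf (toEdge p) (toEdge q) heq
    have B := hf (toEdge q) (toEdge p) heq.symm
    have hne : p.1.1 ≠ q.1.1 := A.2 (fun h => hpq (toEdge_injective h))
    have hA1 : p.1.1 ≠ Sym2.Mem.other q.2 := A.1
    have hB1 : q.1.1 ≠ Sym2.Mem.other p.2 := B.1
    rcases hconf with h | h | h
    · exact hne h
    · rw [← Sym2.other_spec p.2] at h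
      rcases Sym2.eq_iff.mp h with ⟨_, hb⟩ | ⟨ha, hb⟩
      · exact hB1 hb
      · exact hne hb.symm
    · rw [← Sym2.other_spec q.2] at h
      rcases Sym2.eq_iff.mp h with ⟨ha, _⟩ | ⟨ha, _⟩
      · exact hne ha
      · exact hA1 ha

/-- For every simple graph `G`, `ι(G) = dst(S(G))`. -/
theorem incidence_eq_dst {V : Type} (G : SimpleGraph V) :
    incidenceChromaticNumber G = dstSymOrient G := by
  have h : {m : ℕ | IncColorable G m} = {m : ℕ | DSFDecomposable G m} :=
    Set.ext fun m => inc_iff_dsf G m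
  unfold incidenceChromaticNumber dstSymOrient
  rw [h]
end

section
/- For all sufficiently large k and integers j with log k ≤ j ≤ (k+r)/2 and 7·log k ≤ r ≤ k, the quantity C(k+r, j)² · ((j+2)/(k+r))^{r·j} is at most exp(−(r/5)·log k). -/
set_option maxHeartbeats 1000000


/-- Case 2 bound: for sufficiently large `k` and integers `j`, `r` with
`log k ≤ j ≤ (k+r)/2` and `7 log k ≤ r ≤ k`,
`C(k+r, j)² · ((j+2)/(k+r))^(r·j) ≤ exp(-(r/5)·log k)`. -/
theorem case_two_bound :
    ∃ k₀ : ℕ, ∀ k j r : ℕ, k₀ ≤ k →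
      Real.log k ≤ (j : ℝ) → (j : ℝ) ≤ ((k : ℝ) + r) / 2 →
      7 * Real.log k ≤ (r : ℝ) → r ≤ k →
      ((k + r).choose j : ℝ) ^ 2 * (((j : ℝ) + 2) / ((k : ℝ) + r)) ^ (r * j) ≤
        Real.exp (-((r : ℝ) / 5) * Real.log k) := by
  refine ⟨65536, fun k j r hk hj1 hj2 hr1 hr2 => ?_⟩
  have hK : (65536 : ℝ) ≤ (k : ℝ) := by exact_mod_cast hk
  have hRK : (r : ℝ) ≤ (k : ℝ) := by exact_mod_cast hr2
  have hR0 : (0 : ℝ) ≤ (r : ℝ) := Nat.cast_nonneg r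
  have hN : (0 : ℝ) < (k : ℝ) + (r : ℝ) := by linarith
  -- log k ≥ 11
  have hL : (11 : ℝ) ≤ Real.log k := by
    have h2 : (0.6931471803 : ℝ) < Real.log 2 := Real.log_two_gt_d9
    have h65536 : ((65536 : ℝ)) = 2 ^ (16 : ℕ) := by norm_num
    have : Real.log 65536 ≤ Real.log k :=
      Real.log_le_log (by norm_num) hK
    rw [h65536, Real.log_pow] at this
    push_cast at this
    linarith
  have hJ : (11 : ℝ) ≤ (j : ℝ) := le_trans hL hj1
  have hR : (77 : ℝ) ≤ (r : ℝ) := by linarith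
  have hr2' : 2 ≤ r := by exact_mod_cast (by linarith : (2:ℝ) ≤ (r:ℝ))
  set p : ℝ := ((j : ℝ) + 2) / ((k : ℝ) + r) with hp_def
  have hp0 : 0 < p := by positivity
  have hp51 : p ≤ 0.51 := by
    rw [hp_def, div_le_iff₀ hN]
    nlinarith
  -- log p ≤ -1/2
  have hlp : Real.log p ≤ -(1/2) := by
    have hexp : (0.51 : ℝ) ≤ Real.exp (-(1/2)) := by
      have h1 : Real.exp 1 < 2.7182818286 := Real.exp_one_lt_d9
      have h2 : Real.exp (-(1/2)) * Real.exp (-(1/2)) * Real.exp 1 = 1 := by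
        rw [← Real.exp_add, ← Real.exp_add]; norm_num
      have h3 : 0 < Real.exp (-(1/2)) := Real.exp_pos _
      have h4 : 0 < Real.exp 1 := Real.exp_pos _
      nlinarith [mul_pos h3 h3, mul_pos (mul_pos h3 h3) h4, sq_nonneg (Real.exp (-(1/2)) - 0.51)]
    calc Real.log p ≤ Real.log 0.51 := Real.log_le_log hp0 hp51
      _ ≤ Real.log (Real.exp (-(1/2))) := Real.log_le_log (by norm_num) hexp
      _ = -(1/2) := Real.log_exp _
  -- log (j+2) ≤ log k + 0.01
  have hlj : Real.log ((j : ℝ) + 2) ≤ Real.log k + 0.01 := by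
    have hjk : (j : ℝ) + 2 ≤ 1.01 * (k : ℝ) := by nlinarith
    have hkpos : (0 : ℝ) < (k : ℝ) := by linarith
    calc Real.log ((j : ℝ) + 2) ≤ Real.log (1.01 * (k : ℝ)) :=
          Real.log_le_log (by positivity) hjk
      _ = Real.log 1.01 + Real.log k := Real.log_mul (by norm_num) (ne_of_gt hkpos)
      _ ≤ 0.01 + Real.log k := by
          have := Real.log_le_sub_one_of_pos (show (0:ℝ) < 1.01 by norm_num)
          linarith
      _ = Real.log k + 0.01 := by ring
  -- choose bound
  have hC : ((k + r).choose j : ℝ) ≤ ((k : ℝ) + r) ^ j := by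
    have := Nat.choose_le_pow (k + r) j
    calc ((k + r).choose j : ℝ) ≤ (((k+r)^j : ℕ) : ℝ) := by exact_mod_cast this
      _ = ((k : ℝ) + r) ^ j := by push_cast; ring
  have hC0 : (0 : ℝ) ≤ ((k + r).choose j : ℝ) := Nat.cast_nonneg _
  -- combine: C^2 * p^(2j) ≤ (j+2)^(2j)
  have hCp : ((k + r).choose j : ℝ) * p ^ j ≤ ((j : ℝ) + 2) ^ j := by
    have h1 : ((k + r).choose j : ℝ) * p ^ j ≤ ((k : ℝ) + r) ^ j * p ^ j :=
      mul_le_mul_of_nonneg_right hC (by positivity)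
    have h2 : ((k : ℝ) + r) ^ j * p ^ j = ((j : ℝ) + 2) ^ j := by
      rw [← mul_pow, hp_def, mul_div_cancel₀ _ (ne_of_gt hN)]
    linarith
  have hsplit : r * j = j * 2 + (r - 2) * j := by
    cases' Nat.exists_eq_add_of_le hr2' with m hm
    subst hm
    simp [Nat.add_sub_cancel_left]
    ring
  have key : ((k + r).choose j : ℝ) ^ 2 * p ^ (r * j) ≤
      (((j : ℝ) + 2) ^ j) ^ 2 * p ^ ((r - 2) * j) := by
    rw [hsplit, pow_add, pow_mul, ← mul_assoc, ← mul_pow]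
    have h1 : (((k + r).choose j : ℝ) * p ^ j) ^ 2 ≤ (((j : ℝ) + 2) ^ j) ^ 2 := by
      apply pow_le_pow_left₀ (by positivity) hCp
    exact mul_le_mul_of_nonneg_right h1 (by positivity)
  -- rewrite RHS candidates as exponentials
  have hjpos : (0 : ℝ) < (j : ℝ) + 2 := by linarith
  have e1 : (((j : ℝ) + 2) ^ j) ^ 2 = Real.exp ((2 * j) * Real.log ((j:ℝ) + 2)) := by
    rw [← Real.exp_log (show (0:ℝ) < (((j : ℝ) + 2) ^ j) ^ 2 by positivity),
      Real.log_pow, Real.log_pow]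
    congr 1
    push_cast
    ring
  have e2 : p ^ ((r - 2) * j) = Real.exp ((((r - 2) * j : ℕ) : ℝ) * Real.log p) := by
    rw [← Real.exp_log (pow_pos hp0 ((r - 2) * j)), Real.log_pow]
  have hcast : (((r - 2) * j : ℕ) : ℝ) = ((r : ℝ) - 2) * j := by
    push_cast [Nat.cast_sub hr2']
    ring
  -- final exponent inequality
  have hexpineq : (2 * (j:ℝ)) * Real.log ((j:ℝ) + 2) + ((r:ℝ) - 2) * j * Real.log p ≤
      -((r : ℝ) / 5) * Real.log k := by
    have hL0 : (0 : ℝ) < Real.log k := by linarith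
    have hstep1 : (2 * (j:ℝ)) * Real.log ((j:ℝ) + 2) ≤ 2 * j * (Real.log k + 0.01) := by
      have : (0:ℝ) ≤ 2 * (j:ℝ) := by linarith
      nlinarith
    have hstep2 : ((r:ℝ) - 2) * j * Real.log p ≤ ((r:ℝ) - 2) * j * (-(1/2)) := by
      have : (0:ℝ) ≤ ((r:ℝ) - 2) * j := by nlinarith
      nlinarith
    have hmain : 2 * (j:ℝ) * (Real.log k + 0.01) + ((r:ℝ) - 2) * j * (-(1/2)) ≤
        -((r : ℝ) / 5) * Real.log k := by
      set L := Real.log k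
      -- need: J*(R/2 - 2L - 1.02) ≥ (R/5)*L, with J ≥ L, R ≥ 7L, L ≥ 11
      nlinarith [mul_nonneg (sub_nonneg.mpr hj1) (by nlinarith : (0:ℝ) ≤ 3*(r:ℝ)/10 - 2*L - 1.02),
        mul_nonneg (le_of_lt hL0) (by linarith : (0:ℝ) ≤ (r:ℝ) - 7*L)]
    linarith
  calc ((k + r).choose j : ℝ) ^ 2 * p ^ (r * j)
      ≤ (((j : ℝ) + 2) ^ j) ^ 2 * p ^ ((r - 2) * j) := key
    _ = Real.exp ((2 * j) * Real.log ((j:ℝ) + 2) + ((r:ℝ) - 2) * j * Real.log p) := by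
        rw [e1, e2, hcast, ← Real.exp_add]
    _ ≤ Real.exp (-((r : ℝ) / 5) * Real.log k) := Real.exp_le_exp.mpr hexpineq
end

section
/- For all sufficiently large k and integers j with 1 ≤ j ≤ log k and 7·log k ≤ r ≤ k, the quantity C(k+r, j)² · ((j+2)/(k+r))^{r·j} is at most exp(−(r/5)·log k). -/
set_option maxRecDepth 10000


/-- Case 3 bound: for sufficiently large `k` and integers `j`, `r` with
`1 ≤ j ≤ log k` and `7 log k ≤ r ≤ k`,
`C(k+r, j)² · ((j+2)/(k+r))^(r·j) ≤ exp(-(r/5)·log k)`. -/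
theorem case_three_bound :
    ∃ k₀ : ℕ, ∀ k j r : ℕ, k₀ ≤ k →
      1 ≤ j → (j : ℝ) ≤ Real.log k →
      7 * Real.log k ≤ (r : ℝ) → r ≤ k →
      ((k + r).choose j : ℝ) ^ 2 * (((j : ℝ) + 2) / ((k : ℝ) + r)) ^ (r * j) ≤
        Real.exp (-((r : ℝ) / 5) * Real.log k) := by
  refine ⟨3 * 10 ^ 43, fun k j r hk hj1 hjL hrL hrk => ?_⟩
  have hkpos : (0:ℕ) < k := lt_of_lt_of_le (by norm_num) hk
  have hkR : (1:ℝ) ≤ (k:ℝ) := by exact_mod_cast hkpos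
  -- log k ≥ 100
  have hek : Real.exp 100 ≤ (k:ℝ) := by
    have h1 : Real.exp 100 = Real.exp 1 ^ (100:ℕ) := by
      rw [← Real.exp_nat_mul]; norm_num
    have h2 : Real.exp 1 ^ (100:ℕ) ≤ (2.7182818286:ℝ) ^ (100:ℕ) :=
      pow_le_pow_left₀ (Real.exp_pos 1).le Real.exp_one_lt_d9.le 100
    have h3 : ((3 * 10 ^ 43 : ℕ):ℝ) ≤ (k:ℝ) := by exact_mod_cast hk
    have h4 : (2.7182818286:ℝ) ^ (100:ℕ) ≤ ((3 * 10 ^ 43 : ℕ):ℝ) := by norm_num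
    rw [h1]; exact h2.trans (h4.trans h3)
  set L := Real.log k with hLdef
  have hL100 : (100:ℝ) ≤ L := by
    have := Real.log_le_log (Real.exp_pos 100) hek
    rwa [Real.log_exp] at this
  have hLpos : (0:ℝ) < L := by linarith
  have hjR : (1:ℝ) ≤ (j:ℝ) := by exact_mod_cast hj1
  have hrR : (0:ℝ) < (r:ℝ) := by linarith
  have hn1 : (1:ℝ) ≤ (k:ℝ) + r := by linarith
  -- log L ≤ L/5
  have hsqrt : Real.sqrt L ≤ L / 10 := by
    rw [show L / 10 = Real.sqrt ((L/10)^2) from (Real.sqrt_sq (by positivity)).symm]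
    exact Real.sqrt_le_sqrt (by nlinarith)
  have hlogL : Real.log L ≤ L / 5 := by
    have h1 : Real.log (Real.sqrt L) = Real.log L / 2 := Real.log_sqrt hLpos.le
    have h2 : Real.log (Real.sqrt L) ≤ Real.sqrt L - 1 :=
      Real.log_le_sub_one_of_pos (Real.sqrt_pos.mpr hLpos)
    nlinarith
  have hlog3 : Real.log 3 ≤ Real.log L := Real.log_le_log (by norm_num) (by linarith)
  -- the base bound
  have hbase : ((j:ℝ) + 2) / ((k:ℝ) + r) ≤ 3 * L / k := by
    apply div_le_div₀ (by positivity) (by linarith) (by linarith) (by linarith)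
  have hbase0 : (0:ℝ) ≤ ((j:ℝ) + 2) / ((k:ℝ) + r) := by positivity
  -- choose bound
  have hchoose : ((k + r).choose j : ℝ) ≤ ((k:ℝ) + r) ^ j := by
    have := Nat.choose_le_pow (k + r) j
    calc ((k + r).choose j : ℝ) ≤ (((k+r)^j : ℕ) : ℝ) := by exact_mod_cast this
      _ = ((k:ℝ) + r) ^ j := by push_cast; ring
  have hchoose2 : ((k + r).choose j : ℝ) ^ 2 ≤ (((k:ℝ) + r) ^ j) ^ 2 :=
    pow_le_pow_left₀ (by positivity) hchoose 2
  -- pow bounds via exp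
  have hnpos : (0:ℝ) < (k:ℝ) + r := by linarith
  have hBpos : (0:ℝ) < 3 * L / k := by positivity
  have e1 : (((k:ℝ) + r) ^ j) ^ 2 = Real.exp ((2 * j) * Real.log ((k:ℝ) + r)) := by
    rw [← pow_mul, ← Real.exp_log (show (0:ℝ) < ((k:ℝ) + r) ^ (j * 2) by positivity),
      Real.log_pow]
    congr 1; push_cast; ring
  have e2 : (3 * L / k) ^ (r * j) = Real.exp (((r:ℝ) * j) * Real.log (3 * L / k)) := by
    rw [← Real.exp_log (show (0:ℝ) < (3 * L / k) ^ (r * j) by positivity), Real.log_pow]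
    congr 1; push_cast; ring
  -- log bounds
  have hlogn : Real.log ((k:ℝ) + r) ≤ 1 + L := by
    have h1 : Real.log ((k:ℝ) + r) ≤ Real.log (2 * k) := by
      apply Real.log_le_log hnpos
      have : (r:ℝ) ≤ k := by exact_mod_cast hrk
      linarith
    have h2 : Real.log (2 * k) = Real.log 2 + L := Real.log_mul (by norm_num) (by linarith)
    have h3 : Real.log 2 ≤ 1 := by
      have := Real.log_le_sub_one_of_pos (by norm_num : (0:ℝ) < 2); linarith
    linarith
  have hlogB : Real.log (3 * L / k) ≤ -(L / 2) := by
    have h1 : Real.log (3 * L / k) = Real.log 3 + Real.log L - L := by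
      rw [Real.log_div (by positivity) (by linarith), Real.log_mul (by norm_num) hLpos.ne']
    linarith
  -- combine
  calc ((k + r).choose j : ℝ) ^ 2 * (((j : ℝ) + 2) / ((k : ℝ) + r)) ^ (r * j)
      ≤ (((k:ℝ) + r) ^ j) ^ 2 * (3 * L / k) ^ (r * j) := by
        apply mul_le_mul hchoose2 (pow_le_pow_left₀ hbase0 hbase _) (by positivity) (by positivity)
    _ = Real.exp ((2 * j) * Real.log ((k:ℝ) + r) + ((r:ℝ) * j) * Real.log (3 * L / k)) := by
        rw [e1, e2, Real.exp_add]
    _ ≤ Real.exp (-((r : ℝ) / 5) * L) := by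
        apply Real.exp_le_exp.mpr
        have hb1 : (2 * (j:ℝ)) * Real.log ((k:ℝ) + r) ≤ 2 * j * (1 + L) := by
          apply mul_le_mul_of_nonneg_left hlogn (by positivity)
        have hb2 : ((r:ℝ) * j) * Real.log (3 * L / k) ≤ ((r:ℝ) * j) * (-(L / 2)) := by
          apply mul_le_mul_of_nonneg_left hlogB (by positivity)
        have key : 2 * (j:ℝ) * (1 + L) + ((r:ℝ) * j) * (-(L / 2)) ≤ -((r : ℝ) / 5) * L := by
          nlinarith [mul_nonneg (sub_nonneg.mpr hjR) (sub_nonneg.mpr hrL),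
            mul_nonneg (sub_nonneg.mpr hL100) (mul_nonneg hrR.le (by linarith : (0:ℝ) ≤ (j:ℝ))),
            mul_nonneg (sub_nonneg.mpr hL100) (by linarith : (0:ℝ) ≤ (j:ℝ))]
        linarith
end

section
/- Let G be a graph with maximum degree Δ sufficiently large, c: V(G) → [Δ+1] a proper colouring of G, and M = Δ + ⌈7·log Δ⌉. Then there exists an assignment of a list L_v ⊆ [M] of size ⌈7·log Δ⌉ to each vertex v ∈ V(G) such that for every vertex w, the family of sets {L_v \ {c(v), c(w)} : v ∈ N_G(w)} has a transversal (a system of distinct representatives). -/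
/-!
Choose the lists independently and uniformly among the `k`-subsets of `[M]`, `k = ⌈7 log Δ⌉`.
For a vertex `w` let `B w` be the event that the family `(L v \ {c v, c w})_{v ∈ N(w)}`
violates Hall's condition. A violation on `S ⊆ N(w)` puts every list `L v`, `v ∈ S`, inside
`T ∪ {c v, c w}` for some set `T` of `|S| - 1` colours, and a union bound over the pairs `(S, T)`
gives `ℙ(B w) ≤ (Δ + 1) Δ⁻⁶`. The event `B w` is determined by the lists on `N(w)`, hence
independent of every family of events `B u` with `N(u) ∩ N(w) = ∅`; all but at most `Δ²` of
them are such.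
The symmetric local lemma with `q = Δ⁻³` then gives lists avoiding every `B w`, and Hall's
theorem turns each `¬ B w` into the required transversal.

Probabilities are counted: the probability space is the finite product `Fintype.piFinset t`
with the uniform measure, and an event is the `Finset` of outcomes where it holds.
-/

open Finset Real

namespace LovaszLocalLemma

variable {ι α β : Type*} [Fintype α] [DecidableEq α]

theorem card_filter_filter_mul_card_piFinset (t : α → Finset β) {P Q : (α → β) → Prop}
    [DecidablePred P] [DecidablePred Q] {T U : Finset α} (hTU : Disjoint T U)
    (hP : ∀ ω ω' : α → β, (∀ v ∈ T, ω v = ω' v) → (P ω ↔ P ω'))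
    (hQ : ∀ ω ω' : α → β, (∀ v ∈ U, ω v = ω' v) → (Q ω ↔ Q ω')) :
    #(((Fintype.piFinset t).filter Q).filter P) * #(Fintype.piFinset t)
      = #((Fintype.piFinset t).filter P) * #((Fintype.piFinset t).filter Q) := by
  -- exchanging the coordinates in `T` between two outcomes is an involution of `Ω × Ω`
  set swap : (α → β) × (α → β) → (α → β) × (α → β) :=
    fun x => (T.piecewise x.1 x.2, T.piecewise x.2 x.1)
  have swap_swap : ∀ x, swap (swap x) = x := fun x => by
    ext v <;> by_cases hv : v ∈ T <;> simp [swap, hv]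
  have agree_T : ∀ ω τ : α → β, ∀ v ∈ T, T.piecewise ω τ v = ω v :=
    fun ω τ v hv => by simp [hv]
  have agree_U : ∀ ω τ : α → β, ∀ v ∈ U, T.piecewise ω τ v = τ v :=
    fun ω τ v hv => by simp [disjoint_right.mp hTU hv]
  have mem : ∀ ω τ, ω ∈ Fintype.piFinset t → τ ∈ Fintype.piFinset t →
      T.piecewise ω τ ∈ Fintype.piFinset t := fun ω τ hω hτ =>
    Fintype.mem_piFinset.mpr fun v => by
      by_cases hv : v ∈ T <;>
        simp [hv, Fintype.mem_piFinset.mp hω v, Fintype.mem_piFinset.mp hτ v]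
  rw [← card_product, ← card_product]
  refine card_nbij' swap swap ?_ ?_ (fun x _ => swap_swap x) (fun x _ => swap_swap x)
  · rintro ⟨ω, τ⟩ hx
    simp only [swap, coe_product, Set.mem_prod, mem_coe, mem_filter] at hx ⊢
    obtain ⟨⟨⟨hω, hQω⟩, hPω⟩, hτ⟩ := hx
    exact ⟨⟨mem _ _ hω hτ, (hP _ _ (agree_T ω τ)).mpr hPω⟩,
      ⟨mem _ _ hτ hω, (hQ _ _ (agree_U τ ω)).mpr hQω⟩⟩
  · rintro ⟨ω, τ⟩ hx
    simp only [swap, coe_product, Set.mem_prod, mem_coe, mem_filter] at hx ⊢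
    obtain ⟨⟨hω, hPω⟩, hτ, hQτ⟩ := hx
    exact ⟨⟨⟨mem _ _ hω hτ, (hQ _ _ (agree_U ω τ)).mpr hQτ⟩,
      (hP _ _ (agree_T ω τ)).mpr hPω⟩, mem _ _ hτ hω⟩

variable (t : α → Finset β) (B : ι → (α → β) → Prop) [∀ i, DecidablePred (B i)]

def avoiding (S : Finset ι) : Finset (α → β) :=
  (Fintype.piFinset t).filter fun ω => ∀ j ∈ S, ¬ B j ω

variable {t B}

@[simp]
theorem avoiding_empty : avoiding t B ∅ = Fintype.piFinset t := by
  simp [avoiding]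

theorem mem_avoiding {S : Finset ι} {ω : α → β} :
    ω ∈ avoiding t B S ↔ ω ∈ Fintype.piFinset t ∧ ∀ j ∈ S, ¬ B j ω :=
  mem_filter

theorem avoiding_subset (S : Finset ι) : avoiding t B S ⊆ Fintype.piFinset t :=
  filter_subset _ _

theorem avoiding_anti {R S : Finset ι} (h : R ⊆ S) : avoiding t B S ⊆ avoiding t B R :=
  monotone_filter_right _ fun _ _ hω j hj => hω j (h hj)

theorem card_avoiding_insert [DecidableEq ι] (i : ι) (S : Finset ι) :
    (#(avoiding t B (insert i S)) : ℝ)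
      = #(avoiding t B S) - #((avoiding t B S).filter (B i)) := by
  have : avoiding t B (insert i S) = (avoiding t B S).filter (fun ω => ¬ B i ω) := by
    ext ω
    simp only [avoiding, mem_filter, forall_mem_insert]
    tauto
  rw [this, eq_sub_iff_add_eq, ← Nat.cast_add, add_comm, card_filter_add_card_filter_not]

theorem pow_mul_card_avoiding_le [DecidableEq ι] {q : ℝ} (hq : q ≤ 1) {R E : Finset ι}
    (hRE : Disjoint R E)
    (h : ∀ j ∈ E, ∀ S ⊆ R ∪ E, j ∉ S →
      #((avoiding t B S).filter (B j)) ≤ q * #(avoiding t B S)) :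
    (1 - q) ^ #E * #(avoiding t B R) ≤ #(avoiding t B (R ∪ E)) := by
  induction E using Finset.induction_on with
  | empty => simp
  | @insert j E hjE ih =>
    have hjRE : j ∉ R ∪ E := by
      simp [hjE, disjoint_right.mp hRE (mem_insert_self j E)]
    have ih := ih (hRE.mono_right (subset_insert j E)) fun i hi S hS =>
      h i (mem_insert_of_mem hi) S (hS.trans (union_subset_union_right (subset_insert j E)))
    have hj := h j (mem_insert_self j E) (R ∪ E)
      (union_subset_union_right (subset_insert j E)) hjRE
    rw [union_insert, card_avoiding_insert, card_insert_of_notMem hjE, pow_succ]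
    nlinarith

theorem card_filter_avoiding_le_of_disjoint {Γ : ι → Finset α} {p : ℝ} (hp0 : 0 ≤ p)
    (hdep : ∀ i (ω ω' : α → β), (∀ v ∈ Γ i, ω v = ω' v) → (B i ω ↔ B i ω'))
    {i : ι} (hp : (#((Fintype.piFinset t).filter (B i)) : ℝ) ≤ p * #(Fintype.piFinset t))
    {R : Finset ι} (hR : ∀ j ∈ R, Disjoint (Γ i) (Γ j)) :
    (#((avoiding t B R).filter (B i)) : ℝ) ≤ p * #(avoiding t B R) := by
  set Ω := Fintype.piFinset t
  rcases (#Ω).eq_zero_or_pos with hΩ | hΩ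
  · have : #((avoiding t B R).filter (B i)) = 0 := Nat.eq_zero_of_le_zero
      (hΩ ▸ card_le_card ((filter_subset _ _).trans (avoiding_subset R)))
    rw [this, Nat.cast_zero]
    positivity
  have hindep :
      #((avoiding t B R).filter (B i)) * #Ω = #(Ω.filter (B i)) * #(avoiding t B R) := by
    convert card_filter_filter_mul_card_piFinset t (Q := fun ω => ∀ j ∈ R, ¬ B j ω)
      ((disjoint_biUnion_right _ _ _).mpr hR) (hdep i) fun ω ω' h => forall₂_congr fun j hj =>
        not_congr (hdep j ω ω' fun v hv => h v (mem_biUnion.mpr ⟨j, hj, hv⟩))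
    all_goals ext ω; simp only [mem_avoiding, mem_filter]
  have hindep : (#((avoiding t B R).filter (B i)) : ℝ) * #Ω
      = #(Ω.filter (B i)) * #(avoiding t B R) := by exact_mod_cast hindep
  have := mul_le_mul_of_nonneg_right hp (Nat.cast_nonneg (#(avoiding t B R)))
  refine le_of_mul_le_mul_right ?_ (Nat.cast_pos.mpr hΩ : (0 : ℝ) < #Ω)
  nlinarith

section Local

variable [Fintype ι] [DecidableEq ι] {Γ : ι → Finset α} {D : ℕ} {q : ℝ}

/-- The local lemma's invariant `ℙ(B i | no B j with j ∈ S) ≤ q`. -/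
theorem card_filter_avoiding_le (hq0 : 0 ≤ q) (hq1 : q ≤ 1)
    (hdep : ∀ i (ω ω' : α → β), (∀ v ∈ Γ i, ω v = ω' v) → (B i ω ↔ B i ω'))
    (hD : ∀ i, #(univ.filter fun j => ¬ Disjoint (Γ i) (Γ j)) ≤ D)
    (hp : ∀ i, (#((Fintype.piFinset t).filter (B i)) : ℝ)
      ≤ q * (1 - q) ^ D * #(Fintype.piFinset t))
    (S : Finset ι) (i : ι) :
    (#((avoiding t B S).filter (B i)) : ℝ) ≤ q * #(avoiding t B S) := by
  induction S using Finset.strongInduction generalizing i with | H S ih =>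
  set N := S.filter fun j => ¬ Disjoint (Γ i) (Γ j)
  set R := S.filter fun j => Disjoint (Γ i) (Γ j)
  have hRN : R ∪ N = S := filter_union_filter_not_eq _ S
  have hN : (1 - q) ^ #N * #(avoiding t B R) ≤ #(avoiding t B S) := by
    rw [← hRN]
    refine pow_mul_card_avoiding_le hq1 (disjoint_filter_filter_not _ _ _)
      fun j hj S' hS' hjS' => ?_
    rw [hRN] at hS'
    exact ih S' (ssubset_of_subset_of_ne hS' (by rintro rfl; exact hjS' (mem_filter.mp hj).1)) j
  have hND : (1 - q) ^ D ≤ (1 - q) ^ #N :=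
    pow_le_pow_of_le_one (by linarith) (by linarith)
      ((card_le_card (filter_subset_filter _ (subset_univ S))).trans (hD i))
  calc (#((avoiding t B S).filter (B i)) : ℝ)
      ≤ #((avoiding t B R).filter (B i)) := by
        exact_mod_cast card_le_card (filter_subset_filter _ (avoiding_anti (filter_subset _ S)))
    _ ≤ q * (1 - q) ^ D * #(avoiding t B R) :=
        card_filter_avoiding_le_of_disjoint (by positivity) hdep (hp i)
          fun j hj => (mem_filter.mp hj).2
    _ ≤ q * ((1 - q) ^ #N * #(avoiding t B R)) := by
        rw [mul_assoc]
        gcongr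
    _ ≤ q * #(avoiding t B S) := by gcongr

theorem lovasz_local_lemma (ht : ∀ a, (t a).Nonempty) (hq0 : 0 ≤ q) (hq1 : q < 1)
    (hdep : ∀ i (ω ω' : α → β), (∀ v ∈ Γ i, ω v = ω' v) → (B i ω ↔ B i ω'))
    (hD : ∀ i, #(univ.filter fun j => ¬ Disjoint (Γ i) (Γ j)) ≤ D)
    (hp : ∀ i, (#((Fintype.piFinset t).filter (B i)) : ℝ)
      ≤ q * (1 - q) ^ D * #(Fintype.piFinset t)) :
    ∃ ω ∈ Fintype.piFinset t, ∀ i, ¬ B i ω := by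
  have hchain := pow_mul_card_avoiding_le (t := t) (B := B) hq1.le (disjoint_empty_left univ)
    fun j _ S _ _ => card_filter_avoiding_le hq0 hq1.le hdep hD hp S j
  rw [avoiding_empty, empty_union] at hchain
  have hΩ : (0 : ℝ) < #(Fintype.piFinset t) :=
    Nat.cast_pos.mpr (card_pos.mpr (Fintype.piFinset_nonempty.mpr ht))
  obtain ⟨ω, hω⟩ := card_pos.mp (Nat.cast_pos.mp
    (lt_of_lt_of_le (mul_pos (pow_pos (sub_pos.mpr hq1) _) hΩ) hchain))
  exact ⟨ω, (mem_avoiding.mp hω).1, fun i => (mem_avoiding.mp hω).2 i (mem_univ i)⟩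

end Local

end LovaszLocalLemma

theorem Nat.choose_mul_pow_le_choose_mul_pow {a M : ℕ} (k : ℕ) (h : a ≤ M) :
    a.choose k * M ^ k ≤ M.choose k * a ^ k := by
  have hdesc : a.descFactorial k * M ^ k ≤ M.descFactorial k * a ^ k := by
    simp only [Nat.descFactorial_eq_prod_range, pow_eq_prod_const, ← prod_mul_distrib]
    refine prod_le_prod' fun i _ => ?_
    have : i * a ≤ i * M := Nat.mul_le_mul_left i h
    rw [Nat.sub_mul, Nat.sub_mul, Nat.mul_comm a M]
    omega
  rw [Nat.descFactorial_eq_factorial_mul_choose, Nat.descFactorial_eq_factorial_mul_choose,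
    mul_assoc, mul_assoc] at hdesc
  exact Nat.le_of_mul_le_mul_left hdesc k.factorial_pos

theorem choose_mul_two_pow_le_choose {a M : ℕ} (k : ℕ) (h : 2 * a ≤ M) :
    a.choose k * 2 ^ k ≤ M.choose k := by
  rcases a.eq_zero_or_pos with rfl | ha
  · rcases k.eq_zero_or_pos with rfl | hk
    · simp
    · simp [Nat.choose_eq_zero_of_lt hk]
  refine Nat.le_of_mul_le_mul_right ?_ (pow_pos ha k)
  calc a.choose k * 2 ^ k * a ^ k = a.choose k * (2 * a) ^ k := by ring
    _ ≤ a.choose k * M ^ k := by gcongr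
    _ ≤ M.choose k * a ^ k := Nat.choose_mul_pow_le_choose_mul_pow k (by omega)

theorem choose_mul_choose_mul_pow_le_of_two_mul_le {Δ k s : ℕ} (hk : 7 ≤ k) (hks : k ≤ s + 1)
    (hs : 2 * (s + 1) ≤ Δ + k) (hM : Δ + k ≤ Δ ^ 2) (h2k : Δ ^ 4 ≤ 2 ^ k) :
    Δ.choose s * (Δ + k).choose (s - 1) * (s + 1).choose k ^ s * Δ ^ 6
      ≤ (Δ + k).choose k ^ s := by
  have hΔ : 1 ≤ Δ := by
    rcases Nat.eq_zero_or_pos Δ with rfl | h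
    · simp at hM; omega
    · exact h
  have hbinom : Δ.choose s * (Δ + k).choose (s - 1) * Δ ^ 6 ≤ (Δ ^ 4) ^ s :=
    calc Δ.choose s * (Δ + k).choose (s - 1) * Δ ^ 6 ≤ Δ ^ s * (Δ ^ 2) ^ s * Δ ^ s := by
          gcongr
          · exact Nat.choose_le_pow Δ s
          · exact (Nat.choose_le_pow _ _).trans
              ((Nat.pow_le_pow_left hM _).trans (Nat.pow_le_pow_right (by positivity) (by omega)))
          · omega
      _ = (Δ ^ 4) ^ s := by ring
  calc Δ.choose s * (Δ + k).choose (s - 1) * (s + 1).choose k ^ s * Δ ^ 6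
      = Δ.choose s * (Δ + k).choose (s - 1) * Δ ^ 6 * (s + 1).choose k ^ s := by ring
    _ ≤ (2 ^ k) ^ s * (s + 1).choose k ^ s := by gcongr; exact hbinom.trans (by gcongr)
    _ = ((s + 1).choose k * 2 ^ k) ^ s := by ring
    _ ≤ (Δ + k).choose k ^ s := by gcongr; exact choose_mul_two_pow_le_choose k hs

-- Here `(s + 1) / (Δ + k) = 1 - (k + j - 1) / (Δ + k)` and `s ≥ (Δ + k) / 3`, so that
-- `((s + 1) / (Δ + k)) ^ (k * s) ≤ exp (-k (k + j - 1) / 3)` beats the polynomial factors.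
theorem pow_mul_pow_mul_pow_le_of_le_two_mul {Δ k s j : ℕ} (hΔ : Δ = s + j)
    (hs : Δ + k ≤ 2 * s + 1) (hL : 100 ≤ log Δ) (hk : 7 * log Δ ≤ k) (hkΔ : k ≤ Δ) :
    Δ ^ (j + 6) * (Δ + k) ^ (k + j + 1) * (s + 1) ^ (k * s) ≤ (Δ + k) ^ (k * s) := by
  set L := log Δ
  have hΔpos : (0 : ℝ) < Δ := by
    rcases Nat.eq_zero_or_pos Δ with h | h
    · simp [L, h] at hL; linarith
    · exact_mod_cast h
  have hk700 : (700 : ℝ) ≤ k := by linarith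
  have hs1 : (1 : ℝ) ≤ s := by
    have : (k : ℝ) ≤ 2 * s + 1 := by exact_mod_cast (show k ≤ 2 * s + 1 by omega)
    linarith
  set M : ℝ := Δ + k with hM
  have hMs : M = s + j + k := by rw [hM, hΔ]; push_cast; ring
  have hMpos : 0 < M := by positivity
  have hM3s : M ≤ 3 * s := by
    have : (Δ + k : ℝ) ≤ 2 * s + 1 := by exact_mod_cast hs
    linarith
  have hlogM : log M ≤ L + 1 := by
    have hM2 : M ≤ 2 * Δ := by
      have : (k : ℝ) ≤ Δ := by exact_mod_cast hkΔ
      linarith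
    calc log M ≤ log (2 * Δ) := log_le_log hMpos hM2
      _ = log 2 + L := log_mul two_ne_zero hΔpos.ne'
      _ ≤ L + 1 := by linarith [log_two_lt_d9]
  have hlogs : log (s + 1) ≤ log M - (k + j - 1) / M := by
    have := log_le_sub_one_of_pos (div_pos (by positivity : (0 : ℝ) < s + 1) hMpos)
    rw [log_div (by positivity) hMpos.ne'] at this
    have e : (s + 1 : ℝ) / M - 1 = -((k + j - 1) / M) := by field_simp; rw [hMs]; ring
    linarith
  have hexp : (k : ℝ) * (k + j - 1) / 3 ≤ (k * s) * ((k + j - 1) / M) := by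
    rw [div_le_iff₀ (by norm_num), mul_div_assoc', div_mul_eq_mul_div, le_div_iff₀ hMpos]
    have : (0 : ℝ) ≤ k * (k + j - 1) := by
      have : (0 : ℝ) ≤ j := j.cast_nonneg
      exact mul_nonneg k.cast_nonneg (by linarith)
    nlinarith
  have hcore : (j + 6) * L + (k + j + 1) * log M ≤ (k : ℝ) * (k + j - 1) / 3 := by
    have hj : (0 : ℝ) ≤ j := j.cast_nonneg
    have : (k + j + 1) * log M ≤ (k + j + 1) * (L + 1) := by gcongr
    nlinarith [mul_nonneg (sub_nonneg.mpr hL) (sub_nonneg.mpr hk700),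
      mul_nonneg (sub_nonneg.mpr hL) hj, mul_nonneg (sub_nonneg.mpr hk) hj]
  have hreal : (Δ : ℝ) ^ (j + 6) * M ^ (k + j + 1) * (s + 1) ^ (k * s) ≤ M ^ (k * s) := by
    rw [← log_le_log_iff (by positivity) (by positivity), log_mul (by positivity) (by positivity),
      log_mul (by positivity) (by positivity), log_pow, log_pow, log_pow, log_pow]
    push_cast
    have := mul_le_mul_of_nonneg_left hlogs (by positivity : (0 : ℝ) ≤ k * s)
    nlinarith
  rw [hM] at hreal
  exact_mod_cast hreal

theorem choose_mul_choose_mul_pow_le_of_le_two_mul {Δ k s : ℕ} (hs : Δ + k ≤ 2 * s + 1)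
    (hsΔ : s ≤ Δ) (hL : 100 ≤ log Δ) (hk : 7 * log Δ ≤ k) (hkΔ : k ≤ Δ) :
    Δ.choose s * (Δ + k).choose (s - 1) * (s + 1).choose k ^ s * Δ ^ 6
      ≤ (Δ + k).choose k ^ s := by
  obtain ⟨j, rfl⟩ := Nat.exists_eq_add_of_le hsΔ
  have hk700 : 700 ≤ k := by exact_mod_cast (show (700 : ℝ) ≤ k by linarith)
  have hC1 : (s + j).choose s ≤ (s + j) ^ j := by
    rw [Nat.choose_symm_add]; exact Nat.choose_le_pow _ _
  have hC2 : (s + j + k).choose (s - 1) ≤ (s + j + k) ^ (k + j + 1) := by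
    rw [← Nat.choose_symm (by omega), show s + j + k - (s - 1) = k + j + 1 by omega]
    exact Nat.choose_le_pow _ _
  have hratio := Nat.pow_le_pow_left
    (Nat.choose_mul_pow_le_choose_mul_pow k (show s + 1 ≤ s + j + k by omega)) s
  have hkey := pow_mul_pow_mul_pow_le_of_le_two_mul rfl hs hL hk hkΔ
  refine Nat.le_of_mul_le_mul_right ?_ (pow_pos (by omega : 0 < s + j + k) (k * s))
  calc (s + j).choose s * (s + j + k).choose (s - 1) * (s + 1).choose k ^ s * (s + j) ^ 6
        * (s + j + k) ^ (k * s)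
      = (s + j).choose s * (s + j + k).choose (s - 1) * (s + j) ^ 6
        * ((s + 1).choose k * (s + j + k) ^ k) ^ s := by ring
    _ ≤ (s + j) ^ j * (s + j + k) ^ (k + j + 1) * (s + j) ^ 6
        * ((s + j + k).choose k * (s + 1) ^ k) ^ s := by gcongr
    _ = (s + j + k).choose k ^ s
        * ((s + j) ^ (j + 6) * (s + j + k) ^ (k + j + 1) * (s + 1) ^ (k * s)) := by ring
    _ ≤ (s + j + k).choose k ^ s * (s + j + k) ^ (k * s) := by gcongr

-- For `#S = s`: the number of pairs `(S, T)` times the probability that every list of `S` lies in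
-- `T` plus two colours is at most `Δ⁻⁶`.
theorem choose_mul_choose_mul_pow_le {Δ k s : ℕ} (hL : 100 ≤ log Δ) (hk : 7 * log Δ ≤ k)
    (hkΔ : k ≤ Δ) (hs : 1 ≤ s) (hsΔ : s ≤ Δ) :
    Δ.choose s * (Δ + k).choose (s - 1) * (s + 1).choose k ^ s * Δ ^ 6
      ≤ (Δ + k).choose k ^ s := by
  by_cases hks : k ≤ s + 1
  swap
  · rw [Nat.choose_eq_zero_of_lt (show s + 1 < k by omega), zero_pow (by omega : s ≠ 0)]
    simp
  by_cases hspread : 2 * (s + 1) ≤ Δ + k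
  swap
  · exact choose_mul_choose_mul_pow_le_of_le_two_mul (by omega) hsΔ hL hk hkΔ
  have hΔ : (0 : ℝ) < Δ := by
    rcases Nat.eq_zero_or_pos Δ with h | h
    · simp [h] at hL; linarith
    · exact_mod_cast h
  have hk7 : 7 ≤ k := by exact_mod_cast (show (7 : ℝ) ≤ k by linarith)
  have hΔ2 : 2 ≤ Δ := by
    by_contra h
    interval_cases Δ <;> simp at hL <;> linarith
  have h2k : Δ ^ 4 ≤ 2 ^ k := by
    have : (Δ : ℝ) ^ 4 ≤ 2 ^ k := by
      rw [← log_le_log_iff (by positivity) (by positivity), log_pow, log_pow]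
      have := log_two_gt_d9
      have := mul_le_mul_of_nonneg_right hk (log_nonneg one_le_two)
      push_cast
      nlinarith
    exact_mod_cast this
  exact choose_mul_choose_mul_pow_le_of_two_mul_le hk7 hks hspread (by nlinarith) h2k

section ProductEvents

variable {α β : Type*} [Fintype α] [DecidableEq α]

theorem card_filter_forall_piFinset_const_mul_le (s : Finset β) (S : Finset α)
    (P : α → β → Prop) [∀ a, DecidablePred (P a)] {m : ℕ}
    (hm : ∀ v ∈ S, #(s.filter (P v)) ≤ m) :
    #((Fintype.piFinset fun _ : α => s).filter fun ω => ∀ v ∈ S, P v (ω v)) * #s ^ #S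
      ≤ m ^ #S * #(Fintype.piFinset fun _ : α => s) := by
  have hfilter : ((Fintype.piFinset fun _ : α => s).filter fun ω => ∀ v ∈ S, P v (ω v))
      = Fintype.piFinset fun v => if v ∈ S then s.filter (P v) else s := by
    ext ω
    simp only [mem_filter, Fintype.mem_piFinset]
    refine ⟨fun h v => ?_, fun h => ⟨fun v => ?_, fun v hv => ?_⟩⟩
    · split_ifs with hv <;> simp [h.1 v, h.2 v, hv]
    · have := h v; split_ifs at this <;> simp_all
    · have := h v; rw [if_pos hv, mem_filter] at this; exact this.2
  calc _ = ∏ v, (#(if v ∈ S then s.filter (P v) else s) * if v ∈ S then #s else 1) := by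
        rw [hfilter, Fintype.card_piFinset, prod_mul_distrib, prod_ite_mem, univ_inter,
          prod_const]
    _ ≤ ∏ v, ((if v ∈ S then m else 1) * #s) := prod_le_prod' fun v _ => by
        split_ifs with hv
        · exact Nat.mul_le_mul_right _ (hm v hv)
        · simp
    _ = _ := by
        rw [prod_mul_distrib, prod_ite_mem, univ_inter, prod_const, prod_const,
          Fintype.card_piFinset, prod_const, card_univ]

theorem card_filter_card_biUnion_sdiff_lt_mul_le (U : Finset β) (k : ℕ) [DecidableEq β]
    {S : Finset α} (hS : S.Nonempty) (hSU : #S ≤ #U + 1) {R : α → Finset β}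
    (hR : ∀ v ∈ S, #(R v) ≤ 2) :
    #((Fintype.piFinset fun _ : α => U.powersetCard k).filter
        fun ω => #(S.biUnion fun v => ω v \ R v) < #S) * (#U).choose k ^ #S
      ≤ (#U).choose (#S - 1) * (#S + 1).choose k ^ #S
        * #(Fintype.piFinset fun _ : α => U.powersetCard k) := by
  set Ω := Fintype.piFinset fun _ : α => U.powersetCard k
  have hcover : (Ω.filter fun ω => #(S.biUnion fun v => ω v \ R v) < #S)
      ⊆ (U.powersetCard (#S - 1)).biUnion
        fun T => Ω.filter fun ω => ∀ v ∈ S, ω v ⊆ T ∪ R v := by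
    intro ω hω
    obtain ⟨hωΩ, hlt⟩ := mem_filter.mp hω
    have hωU : ∀ v, ω v ⊆ U := fun v =>
      (mem_powersetCard.mp (Fintype.mem_piFinset.mp hωΩ v)).1
    obtain ⟨T, hT₀T, hTU, hT⟩ := exists_subsuperset_card_eq
      (biUnion_subset.mpr fun v _ => sdiff_subset.trans (hωU v)) (Nat.le_sub_one_of_lt hlt)
      (by omega)
    refine mem_biUnion.mpr
      ⟨T, mem_powersetCard.mpr ⟨hTU, hT⟩, mem_filter.mpr ⟨hωΩ, ?_⟩⟩
    intro v hv x hx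
    by_cases hxR : x ∈ R v
    · exact mem_union_right _ hxR
    · exact mem_union_left _ (hT₀T (mem_biUnion.mpr ⟨v, hv, mem_sdiff.mpr ⟨hx, hxR⟩⟩))
  have hevent : ∀ T ∈ U.powersetCard (#S - 1),
      #(Ω.filter fun ω => ∀ v ∈ S, ω v ⊆ T ∪ R v) * (#U).choose k ^ #S
        ≤ (#S + 1).choose k ^ #S * #Ω := by
    intro T hT
    rw [← card_powersetCard]
    refine card_filter_forall_piFinset_const_mul_le _ S (fun v A => A ⊆ T ∪ R v) fun v hv => ?_
    calc #((U.powersetCard k).filter (· ⊆ T ∪ R v)) ≤ #((T ∪ R v).powersetCard k) :=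
          card_le_card fun A hA => by
            rw [mem_filter, mem_powersetCard] at hA
            exact mem_powersetCard.mpr ⟨hA.2, hA.1.2⟩
      _ ≤ (#S + 1).choose k := by
          rw [card_powersetCard]
          refine Nat.choose_le_choose k ((card_union_le _ _).trans ?_)
          have := (mem_powersetCard.mp hT).2
          have := hR v hv
          have := hS.card_pos
          omega
  calc _ ≤ (∑ T ∈ U.powersetCard (#S - 1),
          #(Ω.filter fun ω => ∀ v ∈ S, ω v ⊆ T ∪ R v)) * (#U).choose k ^ #S :=
        Nat.mul_le_mul_right _ ((card_le_card hcover).trans card_biUnion_le)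
    _ ≤ ∑ T ∈ U.powersetCard (#S - 1), (#S + 1).choose k ^ #S * #Ω := by
        rw [sum_mul]; exact sum_le_sum hevent
    _ = _ := by rw [sum_const, card_powersetCard, smul_eq_mul, mul_assoc]

end ProductEvents

section Hall

variable {α β : Type*} [DecidableEq β]

def ViolatesHall (N : Finset α) (A : α → Finset β) : Prop := ∃ S ⊆ N, #(S.biUnion A) < #S

instance (N : Finset α) (A : α → Finset β) : Decidable (ViolatesHall N A) :=
  inferInstanceAs (Decidable (∃ S ⊆ N, _))

theorem violatesHall_congr {N : Finset α} {A A' : α → Finset β} (h : ∀ v ∈ N, A v = A' v) :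
    ViolatesHall N A ↔ ViolatesHall N A' := by
  refine exists_congr fun S => and_congr_right fun hS => ?_
  rw [biUnion_congr rfl fun v hv => h v (hS hv)]

theorem exists_injOn_of_not_violatesHall [Nonempty β] {N : Finset α} {A : α → Finset β}
    (h : ¬ ViolatesHall N A) : ∃ f : α → β, Set.InjOn f N ∧ ∀ v ∈ N, f v ∈ A v := by
  classical
  have hall : ∀ s : Finset N, #s ≤ #(s.biUnion fun v => A v) := fun s => by
    have := not_lt.mp fun hlt => h ⟨s.image Subtype.val, fun x hx => by
      obtain ⟨v, -, rfl⟩ := mem_image.mp hx; exact v.2, hlt⟩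
    rwa [card_image_of_injective _ Subtype.val_injective, image_biUnion] at this
  obtain ⟨f, hf, hfA⟩ := (all_card_le_biUnion_card_iff_existsInjective' _).mp hall
  refine ⟨fun v => if hv : v ∈ N then f ⟨v, hv⟩ else Classical.arbitrary β,
    fun u hu v hv huv => ?_, fun v hv => ?_⟩
  · simp only [mem_coe] at hu hv
    exact congrArg Subtype.val (hf (by simpa [hu, hv] using huv))
  · simpa [hv] using hfA ⟨v, hv⟩

theorem sum_card_filter_card_biUnion_sdiff_lt_mul_le [Fintype α] [DecidableEq α] {Δ k : ℕ}
    (hL : 100 ≤ log Δ) (hk : 7 * log Δ ≤ k) (hkΔ : k ≤ Δ)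
    {U : Finset β} (hU : #U = Δ + k)
    {N : Finset α} (hN : #N ≤ Δ) {R : α → Finset β} (hR : ∀ v, #(R v) ≤ 2) {s : ℕ}
    (hs : s ≤ #N) :
    (∑ S ∈ N.powersetCard s, #((Fintype.piFinset fun _ : α => U.powersetCard k).filter
        fun ω => #(S.biUnion fun v => ω v \ R v) < #S)) * Δ ^ 6
      ≤ #(Fintype.piFinset fun _ : α => U.powersetCard k) := by
  set Ω := Fintype.piFinset fun _ : α => U.powersetCard k
  rcases Nat.eq_zero_or_pos s with rfl | hs1
  · simp
  refine Nat.le_of_mul_le_mul_right ?_ (pow_pos (Nat.choose_pos (show k ≤ #U by omega)) s)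
  calc _ = (∑ S ∈ N.powersetCard s,
          #(Ω.filter fun ω => #(S.biUnion fun v => ω v \ R v) < #S) * (#U).choose k ^ s)
          * Δ ^ 6 := by
        rw [mul_right_comm, sum_mul]
    _ ≤ (∑ _S ∈ N.powersetCard s, (#U).choose (s - 1) * (s + 1).choose k ^ s * #Ω)
          * Δ ^ 6 := by
        refine Nat.mul_le_mul_right _ (sum_le_sum fun S hS => ?_)
        obtain ⟨-, rfl⟩ := mem_powersetCard.mp hS
        exact card_filter_card_biUnion_sdiff_lt_mul_le U k (card_pos.mp hs1) (by omega)
          fun v _ => hR v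
    _ = (#N).choose s * (Δ + k).choose (s - 1) * (s + 1).choose k ^ s * Δ ^ 6 * #Ω := by
        rw [sum_const, card_powersetCard, smul_eq_mul, hU]; ring
    _ ≤ Δ.choose s * (Δ + k).choose (s - 1) * (s + 1).choose k ^ s * Δ ^ 6 * #Ω := by
        gcongr
    _ ≤ (Δ + k).choose k ^ s * #Ω := by
        gcongr; exact choose_mul_choose_mul_pow_le hL hk hkΔ hs1 (by omega)
    _ = #Ω * (#U).choose k ^ s := by rw [hU, mul_comm]

theorem card_filter_violatesHall_mul_le [Fintype α] [DecidableEq α] {Δ k : ℕ}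
    (hL : 100 ≤ log Δ) (hk : 7 * log Δ ≤ k) (hkΔ : k ≤ Δ)
    {U : Finset β} (hU : #U = Δ + k)
    {N : Finset α} (hN : #N ≤ Δ) {R : α → Finset β} (hR : ∀ v, #(R v) ≤ 2) :
    #((Fintype.piFinset fun _ : α => U.powersetCard k).filter
        fun ω => ViolatesHall N fun v => ω v \ R v) * Δ ^ 6
      ≤ (Δ + 1) * #(Fintype.piFinset fun _ : α => U.powersetCard k) := by
  set Ω := Fintype.piFinset fun _ : α => U.powersetCard k
  set E : Finset α → Finset (α → Finset β) :=
    fun S => Ω.filter fun ω => #(S.biUnion fun v => ω v \ R v) < #S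
  have hcover :
      (Ω.filter fun ω => ViolatesHall N fun v => ω v \ R v) ⊆ N.powerset.biUnion E :=
    fun ω hω => by
      obtain ⟨hωΩ, S, hSN, hS⟩ := mem_filter.mp hω
      exact mem_biUnion.mpr ⟨S, mem_powerset.mpr hSN, mem_filter.mpr ⟨hωΩ, hS⟩⟩
  calc _ ≤ (∑ S ∈ N.powerset, #(E S)) * Δ ^ 6 :=
        Nat.mul_le_mul_right _ ((card_le_card hcover).trans card_biUnion_le)
    _ = ∑ s ∈ range (#N + 1), (∑ S ∈ N.powersetCard s, #(E S)) * Δ ^ 6 := by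
        simp only [← sum_mul, powersetCard_eq_filter]
        exact congrArg (· * Δ ^ 6) (sum_fiberwise_of_maps_to (g := card) (fun S hS =>
          mem_range.mpr (Nat.lt_succ_of_le (card_le_card (mem_powerset.mp hS)))) _).symm
    _ ≤ ∑ _s ∈ range (#N + 1), #Ω := sum_le_sum fun s hs =>
        sum_card_filter_card_biUnion_sdiff_lt_mul_le hL hk hkΔ hU hN hR
          (Nat.le_of_lt_succ (mem_range.mp hs))
    _ ≤ (Δ + 1) * #Ω := by rw [sum_const, card_range, smul_eq_mul]; gcongr

end Hall

theorem SimpleGraph.card_filter_not_disjoint_neighborFinset_le {V : Type*} [Fintype V]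
    [DecidableEq V] (G : SimpleGraph V) [DecidableRel G.Adj] (v : V) :
    #(univ.filter fun u => ¬ Disjoint (G.neighborFinset v) (G.neighborFinset u))
      ≤ G.maxDegree ^ 2 := by
  have hsub : (univ.filter fun u => ¬ Disjoint (G.neighborFinset v) (G.neighborFinset u))
      ⊆ (G.neighborFinset v).biUnion fun x => G.neighborFinset x := fun u hu => by
    obtain ⟨x, hxv, hxu⟩ := not_disjoint_iff.mp (mem_filter.mp hu).2
    exact mem_biUnion.mpr
      ⟨x, hxv, (G.mem_neighborFinset _ _).mpr ((G.mem_neighborFinset _ _).mp hxu).symm⟩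
  calc _ ≤ ∑ x ∈ G.neighborFinset v, #(G.neighborFinset x) :=
        (card_le_card hsub).trans card_biUnion_le
    _ ≤ ∑ _x ∈ G.neighborFinset v, G.maxDegree :=
        sum_le_sum fun x _ =>
          (G.card_neighborFinset_eq_degree x).trans_le (G.degree_le_maxDegree x)
    _ ≤ G.maxDegree ^ 2 := by
        rw [sum_const, smul_eq_mul, sq, G.card_neighborFinset_eq_degree]
        exact Nat.mul_le_mul_right _ (G.degree_le_maxDegree v)

theorem add_one_div_pow_six_le {Δ : ℕ} (hΔ : 2 ≤ Δ) :
    ((Δ : ℝ) + 1) / Δ ^ 6 ≤ 1 / Δ ^ 3 * (1 - 1 / Δ ^ 3) ^ Δ ^ 2 := by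
  have hΔ' : (2 : ℝ) ≤ Δ := by exact_mod_cast hΔ
  have hbern : 1 - 1 / (Δ : ℝ) ≤ (1 - 1 / Δ ^ 3) ^ Δ ^ 2 := by
    have hq : 1 / (Δ : ℝ) ^ 3 ≤ 1 :=
      div_le_one_of_le₀ (one_le_pow₀ (by linarith)) (by positivity)
    have hΔ0 : (Δ : ℝ) ≠ 0 := by positivity
    calc 1 - 1 / (Δ : ℝ) = 1 + ((Δ ^ 2 : ℕ) : ℝ) * -(1 / Δ ^ 3) := by
          push_cast; field_simp; ring
      _ ≤ (1 + -(1 / Δ ^ 3)) ^ Δ ^ 2 := one_add_mul_le_pow (by linarith) _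
      _ = (1 - 1 / Δ ^ 3) ^ Δ ^ 2 := by ring
  calc ((Δ : ℝ) + 1) / Δ ^ 6 ≤ 1 / Δ ^ 3 * (1 - 1 / Δ) := by
        rw [div_le_iff₀ (by positivity)]
        field_simp
        nlinarith
    _ ≤ _ := by gcongr

theorem ceil_seven_mul_log_le_self {Δ : ℕ} (hL : 12 ≤ log Δ) :
    ⌈7 * log Δ⌉₊ ≤ Δ := by
  have hΔ : (0 : ℝ) < Δ := by
    rcases Nat.eq_zero_or_pos Δ with h | h
    · simp [h] at hL; linarith
    · exact_mod_cast h
  refine Nat.ceil_le.mpr ?_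
  calc 7 * log Δ ≤ 1 + log Δ + log Δ ^ 2 / 2 := by nlinarith
    _ ≤ exp (log Δ) := quadratic_le_exp_of_nonneg (by linarith)
    _ = Δ := exp_log hΔ

theorem exists_lists_forall_not_violatesHall {V β : Type*} [Fintype V] [DecidableEq V]
    [DecidableEq β] (G : SimpleGraph V) [DecidableRel G.Adj] (c : V → β) {k : ℕ}
    {U : Finset β}
    (hL : 100 ≤ log G.maxDegree) (hk : 7 * log G.maxDegree ≤ k) (hkΔ : k ≤ G.maxDegree)
    (hU : #U = G.maxDegree + k) :
    ∃ L : V → Finset β, (∀ v, L v ∈ U.powersetCard k) ∧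
      ∀ w, ¬ ViolatesHall (G.neighborFinset w) fun v => L v \ {c v, c w} := by
  set Δ := G.maxDegree
  have hΔ2 : (2 : ℝ) ≤ Δ := by
    have : (k : ℝ) ≤ Δ := by exact_mod_cast hkΔ
    linarith
  have hp : ∀ w, (#((Fintype.piFinset fun _ : V => U.powersetCard k).filter fun L =>
      ViolatesHall (G.neighborFinset w) fun v => L v \ {c v, c w}) : ℝ)
      ≤ 1 / Δ ^ 3 * (1 - 1 / Δ ^ 3) ^ Δ ^ 2
        * #(Fintype.piFinset fun _ : V => U.powersetCard k) := by
    intro w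
    have hcount := card_filter_violatesHall_mul_le hL hk hkΔ hU
      ((G.card_neighborFinset_eq_degree w).trans_le (G.degree_le_maxDegree w))
      (R := fun v => {c v, c w}) fun v => card_le_two
    rw [← Nat.cast_le (α := ℝ)] at hcount
    push_cast at hcount
    rw [← le_div_iff₀ (pow_pos (by linarith) 6), mul_div_right_comm] at hcount
    exact hcount.trans (by gcongr; exact add_one_div_pow_six_le (by exact_mod_cast hΔ2))
  obtain ⟨L, hL, hgood⟩ := LovaszLocalLemma.lovasz_local_lemma (t := fun _ => U.powersetCard k)
    (B := fun w L => ViolatesHall (G.neighborFinset w) fun v => L v \ {c v, c w})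
    (Γ := fun w => G.neighborFinset w) (fun _ => powersetCard_nonempty.mpr (by omega))
    (by positivity)
    ((div_lt_one₀ (by positivity)).mpr (one_lt_pow₀ (by linarith) (by norm_num)))
    (fun w L L' h => violatesHall_congr fun v hv => by rw [h v hv])
    G.card_filter_not_disjoint_neighborFinset_le hp
  exact ⟨L, Fintype.mem_piFinset.mp hL, hgood⟩

/-- For `Δ = Δ(G)` sufficiently large, given a proper colouring `c` of `G` with colours
in `[Δ+1]`, there are lists `L_v ⊆ [M]`, `M = Δ + ⌈7 log Δ⌉`, each of size `⌈7 log Δ⌉`,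
such that for every vertex `w` the family `{L_v \ {c(v), c(w)} : v ∈ N_G(w)}` has a
transversal. -/
theorem exists_lists_with_transversals :
    ∃ Δ₀ : ℕ, ∀ (V : Type) (_ : Fintype V) (_ : DecidableEq V) (G : SimpleGraph V)
      (_ : DecidableRel G.Adj), Δ₀ ≤ G.maxDegree →
      ∀ c : V → ℕ, (∀ v, c v < G.maxDegree + 1) → (∀ u v, G.Adj u v → c u ≠ c v) →
        ∃ L : V → Finset ℕ,
          (∀ v, L v ⊆ Finset.range (G.maxDegree + ⌈7 * Real.log G.maxDegree⌉₊)) ∧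
          (∀ v, (L v).card = ⌈7 * Real.log G.maxDegree⌉₊) ∧
          ∀ w : V, ∃ t : V → ℕ, Set.InjOn t (G.neighborSet w) ∧
            ∀ v ∈ G.neighborSet w, t v ∈ L v ∧ t v ≠ c v ∧ t v ≠ c w := by
  refine ⟨⌈exp 100⌉₊, fun V _ _ G _ hΔ c _ _ => ?_⟩
  have hΔ' : exp 100 ≤ G.maxDegree := (Nat.le_ceil _).trans (by exact_mod_cast hΔ)
  have hL : 100 ≤ log G.maxDegree := (le_log_iff_exp_le ((exp_pos 100).trans_le hΔ')).mpr hΔ'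
  obtain ⟨L, hLU, hgood⟩ := exists_lists_forall_not_violatesHall G c hL (Nat.le_ceil _)
    (ceil_seven_mul_log_le_self (by linarith)) (card_range _)
  refine ⟨L, fun v => (mem_powersetCard.mp (hLU v)).1, fun v => (mem_powersetCard.mp (hLU v)).2,
    fun w => ?_⟩
  obtain ⟨t, ht, htL⟩ := exists_injOn_of_not_violatesHall (hgood w)
  refine ⟨t, by rwa [G.coe_neighborFinset] at ht, fun v hv => ?_⟩
  have := htL v ((G.mem_neighborFinset w v).mpr hv)
  simp only [mem_sdiff, mem_insert, mem_singleton, not_or] at this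
  exact ⟨this.1, this.2.1, this.2.2⟩
end
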